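/- arXiv:1711.05485 — 7 statements merged into one kernel-verified Lean document; each statement's English description precedes it below -/
import Mathlib

section
/- Let V be a valuation domain of rank one with maximal ideal M. If V contains a pseudo-stationary sequence E = {s_n} (i.e., v(s_n - s_m) = γ for all n ≠ m, for a fixed γ in the value group), then the residue field V/M is infinite. -/
/-- If a rank-one valuation domain `V` contains a
pseudo-stationary sequence (`v (s n - s m) = γ` for all `n ≠ m`, with `γ` in the
value group), then the residue field `V ⧸ M` is infinite. -/
theorem stmt1 {K : Type*} [Field K] (v : AddValuation K (WithTop ℝ))
    (hrank : ∃ π : K, 0 < v π ∧ v π ≠ ⊤)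
    (V : Subring K) (hV : ∀ x : K, x ∈ V ↔ 0 ≤ v x)
    (M : Ideal V) (hM : ∀ x : V, x ∈ M ↔ 0 < v (x : K))
    (γ : ℝ) (hγ : ∃ x : K, x ≠ 0 ∧ v x = (γ : WithTop ℝ))
    (s : ℕ → K) (hsV : ∀ n, s n ∈ V)
    (hstat : ∀ n m : ℕ, n ≠ m → v (s n - s m) = (γ : WithTop ℝ)) :
    Infinite (V ⧸ M) := by
  obtain ⟨x, hx0, hxγ⟩ := hγ
  have hinv : v x⁻¹ = ((-γ : ℝ) : WithTop ℝ) := by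
    rw [v.map_inv, hxγ]
    rfl
  -- valuation of (s n - s m) * x⁻¹ is 0 for n ≠ m
  have hval : ∀ n m : ℕ, n ≠ m → v ((s n - s m) * x⁻¹) = 0 := by
    intro n m hnm
    rw [v.map_mul, hstat n m hnm, hinv]
    rw [← WithTop.coe_add]
    norm_num
  have hmem : ∀ n : ℕ, (s (n + 1) - s 0) * x⁻¹ ∈ V := by
    intro n
    rw [hV]
    rw [hval (n + 1) 0 (Nat.succ_ne_zero n)]
  set f : ℕ → V ⧸ M := fun n => Ideal.Quotient.mk M ⟨(s (n + 1) - s 0) * x⁻¹, hmem n⟩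
  have hinj : Function.Injective f := by
    intro n m h
    by_contra hnm
    have hdiff : (⟨(s (n + 1) - s 0) * x⁻¹, hmem n⟩ : V) - ⟨(s (m + 1) - s 0) * x⁻¹, hmem m⟩ ∈ M := by
      exact Ideal.Quotient.eq.mp h
    rw [hM] at hdiff
    have : ((⟨(s (n + 1) - s 0) * x⁻¹, hmem n⟩ - ⟨(s (m + 1) - s 0) * x⁻¹, hmem m⟩ : V) : K)
        = (s (n + 1) - s (m + 1)) * x⁻¹ := by
      push_cast
      ring
    rw [this, hval (n + 1) (m + 1) (by omega)] at hdiff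
    exact lt_irrefl _ hdiff
  exact Infinite.of_injective f hinj
end

section
/- Let α ∈ K and let δ be an element of an ordered abelian group Γ containing the value group Γ_v. Define v_{α,δ} on K[X] by v_{α,δ}(Σ a_i (X - α)^i) = min_i (v(a_i) + iδ), extended to K(X). Then v_{α,δ} is a residually transcendental extension of v (the residue field of V_{α,δ} is transcendental over V/M) if and only if nδ ∈ Γ_v for some integer n ≥ 1. -/
open Polynomial

/-- The valuation `v_{α,δ}` on polynomials: writing `f = Σ aᵢ (X - α)^i`,
`v_{α,δ} f = min_i (v aᵢ + i • δ)` (with value `⊤` on the zero polynomial). -/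
noncomputable def vAlphaDelta {K : Type*} [Field K] {Γ : Type*}
    [AddCommGroup Γ] [LinearOrder Γ] [IsOrderedAddMonoid Γ] (v : AddValuation K (WithTop Γ)) (α : K) (δ : Γ)
    (f : Polynomial K) : WithTop Γ :=
  (f.comp (X + C α)).support.inf
    (fun i => v ((f.comp (X + C α)).coeff i) + ((i • δ : Γ) : WithTop Γ))

/-
If no positive multiple of `δ` lies in `Γ_v`, the terms `v aᵢ + i • δ` of a nonzero polynomial
expanded at `α` are pairwise distinct, so the minimum defining `v_{α,δ}` is attained exactly
once. For a unit `φ = f / g` the minimal terms of `f` and `g` then sit at the same index, and the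
ratio `c` of their coefficients is a `v`-unit with `w (φ - c) > 0`: the residue of `φ` is that of
the constant `c`, which is algebraic. Conversely, if `v x = n • δ` with `n > 0`, the residue of
`φ = (X - α)ⁿ / x` is transcendental: after clearing denominators, `φ^d + Σ aᵢ φ^i` becomes a
polynomial in `(X - α)ⁿ` whose leading term `(X - α)^{nd}` has the value `v (x^d)`, and no other
term has a smaller one.
-/

theorem add_sum_div_pow_mul_pow {F : Type*} [Field F] {t u : F} (hu : u ≠ 0) (d : ℕ)
    (b : ℕ → F) :
    ((t / u) ^ d + ∑ i ∈ Finset.range d, b i * (t / u) ^ i) * u ^ d =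
      t ^ d + ∑ i ∈ Finset.range d, b i * u ^ (d - i) * t ^ i := by
  rw [add_mul, Finset.sum_mul, div_pow, div_mul_cancel₀ _ (pow_ne_zero d hu)]
  congr 1
  refine Finset.sum_congr rfl fun i hi => ?_
  rw [← pow_sub_mul_pow u (Finset.mem_range.mp hi).le, div_pow]
  field_simp

theorem coeff_X_pow_mul_add_sum_C_mul_X_pow_mul {R : Type*} [Semiring R] {n : ℕ} (hn : 0 < n)
    (d : ℕ) (b : ℕ → R) :
    (X ^ (n * d) + ∑ i ∈ Finset.range d, C (b i) * X ^ (n * i)).coeff (n * d) = 1 := by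
  rw [coeff_add, coeff_X_pow_self, finsetSum_coeff, Finset.sum_eq_zero, add_zero]
  intro i hi
  rw [coeff_C_mul_X_pow, if_neg]
  have := Finset.mem_range.mp hi
  exact fun h => this.ne (Nat.eq_of_mul_eq_mul_left hn h).symm

section

variable {K : Type*} [Field K] {Γ : Type*} [AddCommGroup Γ] [LinearOrder Γ] [IsOrderedAddMonoid Γ]
  {v : AddValuation K (WithTop Γ)} {δ : Γ}

theorem eq_of_val_add_nsmul_eq
    (hδ : ∀ n : ℕ, 0 < n → ∀ x : K, x ≠ 0 → v x ≠ ((n • δ : Γ) : WithTop Γ))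
    {a b : K} (ha : a ≠ 0) (hb : b ≠ 0) {i j : ℕ}
    (h : v a + ((i • δ : Γ) : WithTop Γ) = v b + ((j • δ : Γ) : WithTop Γ)) : i = j := by
  wlog hij : i ≤ j generalizing a b i j
  · exact (this hb ha h.symm (le_of_not_ge hij)).symm
  by_contra hne
  obtain ⟨γa, hγa⟩ := WithTop.ne_top_iff_exists.mp (v.ne_top_iff.mpr ha)
  obtain ⟨γb, hγb⟩ := WithTop.ne_top_iff_exists.mp (v.ne_top_iff.mpr hb)
  rw [← hγa, ← hγb] at h
  have hΓ : γa + i • δ = j • δ + γb := by rw [add_comm _ γb]; exact_mod_cast h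
  refine hδ (j - i) (by omega) (a / b) (div_ne_zero ha hb) ?_
  rw [v.map_div, ← hγa, ← hγb, ← WithTop.LinearOrderedAddCommGroup.coe_sub, sub_nsmul δ hij,
    ← sub_eq_add_neg]
  exact congrArg _ (sub_eq_sub_iff_add_eq_add.mpr hΓ)

namespace Polynomial

variable (v δ)

noncomputable def gaussVal (p : K[X]) : WithTop Γ :=
  p.support.inf fun i => v (p.coeff i) + ((i • δ : Γ) : WithTop Γ)

theorem exists_gaussVal_eq {p : K[X]} (hp : p ≠ 0) :
    ∃ i, p.coeff i ≠ 0 ∧ gaussVal v δ p = v (p.coeff i) + ((i • δ : Γ) : WithTop Γ) := by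
  obtain ⟨i, hi, heq⟩ := Finset.exists_mem_eq_inf p.support (support_nonempty.mpr hp)
    fun i => v (p.coeff i) + ((i • δ : Γ) : WithTop Γ)
  exact ⟨i, mem_support_iff.mp hi, heq⟩

theorem gaussVal_ne_top {p : K[X]} (hp : p ≠ 0) : gaussVal v δ p ≠ ⊤ := by
  obtain ⟨i, hi, heq⟩ := exists_gaussVal_eq v δ hp
  rw [heq]
  exact WithTop.add_ne_top.mpr ⟨v.ne_top_iff.mpr hi, WithTop.coe_ne_top⟩

variable {v δ}

theorem gaussVal_le (p : K[X]) (i : ℕ) :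
    gaussVal v δ p ≤ v (p.coeff i) + ((i • δ : Γ) : WithTop Γ) := by
  by_cases hi : p.coeff i = 0
  · simp [hi]
  · exact Finset.inf_le (mem_support_iff.mpr hi)

theorem lt_gaussVal {p : K[X]} {g : WithTop Γ}
    (h : ∀ i, g < v (p.coeff i) + ((i • δ : Γ) : WithTop Γ)) : g < gaussVal v δ p :=
  (Finset.lt_inf_iff ((h 0).trans_le le_top)).mpr fun i _ => h i

theorem gaussVal_C_mul_X_pow (b : K) (k : ℕ) :
    gaussVal v δ (C b * X ^ k) = v b + ((k • δ : Γ) : WithTop Γ) := by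
  by_cases hb : b = 0
  · simp [hb, gaussVal]
  · simp [gaussVal, support_C_mul_X_pow k hb]

theorem gaussVal_lt_of_ne
    (hδ : ∀ n : ℕ, 0 < n → ∀ x : K, x ≠ 0 → v x ≠ ((n • δ : Γ) : WithTop Γ))
    {p : K[X]} {i : ℕ} (hi : p.coeff i ≠ 0)
    (heq : gaussVal v δ p = v (p.coeff i) + ((i • δ : Γ) : WithTop Γ)) {j : ℕ} (hji : j ≠ i) :
    gaussVal v δ p < v (p.coeff j) + ((j • δ : Γ) : WithTop Γ) := by
  refine (gaussVal_le p j).lt_of_ne fun hj => ?_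
  by_cases hj0 : p.coeff j = 0
  · rw [hj0, v.map_zero, top_add] at hj
    exact gaussVal_ne_top v δ (fun hp => hi (by simp [hp])) hj
  · exact hji (eq_of_val_add_nsmul_eq hδ hj0 hi (hj.symm.trans heq))

theorem exists_gaussVal_lt_gaussVal_sub
    (hδ : ∀ n : ℕ, 0 < n → ∀ x : K, x ≠ 0 → v x ≠ ((n • δ : Γ) : WithTop Γ))
    {F G : K[X]} (hF : F ≠ 0) (hG : G ≠ 0) (hFG : gaussVal v δ F = gaussVal v δ G) :
    ∃ c : K, v c = 0 ∧ gaussVal v δ F < gaussVal v δ (F - C c * G) := by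
  obtain ⟨i, hFi, hFval⟩ := exists_gaussVal_eq v δ hF
  obtain ⟨j, hGj, hGval⟩ := exists_gaussVal_eq v δ hG
  have hmin := hFval.symm.trans (hFG.trans hGval)
  obtain rfl : i = j := eq_of_val_add_nsmul_eq hδ hFi hGj hmin
  set c := F.coeff i / G.coeff i
  have hcG : c * G.coeff i = F.coeff i := div_mul_cancel₀ _ hGj
  have hvc : v c = 0 := by
    have hv : v c + v (G.coeff i) = 0 + v (G.coeff i) := by
      rw [← v.map_mul, hcG, zero_add]
      exact WithTop.add_right_cancel WithTop.coe_ne_top hmin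
    exact WithTop.add_right_cancel (v.ne_top_iff.mpr hGj) hv
  refine ⟨c, hvc, lt_gaussVal fun k => ?_⟩
  rw [coeff_sub, coeff_C_mul]
  by_cases hki : k = i
  · rw [hki, hcG, sub_self, v.map_zero, top_add]
    exact (gaussVal_ne_top v δ hF).lt_top
  have hFk := gaussVal_lt_of_ne hδ hFi hFval hki
  have hGk : gaussVal v δ F < v (c * G.coeff k) + ((k • δ : Γ) : WithTop Γ) := by
    rw [v.map_mul, hvc, zero_add, hFG]
    exact gaussVal_lt_of_ne hδ hGj hGval hki
  calc gaussVal v δ F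
      < min (v (F.coeff k)) (v (c * G.coeff k)) + ((k • δ : Γ) : WithTop Γ) := by
        rw [← min_add_add_right]; exact lt_min hFk hGk
    _ ≤ v (F.coeff k - c * G.coeff k) + ((k • δ : Γ) : WithTop Γ) := by
        gcongr; exact v.map_sub _ _

end Polynomial

section RatFunc

variable {α : K} {w : AddValuation (RatFunc K) (WithTop Γ)}

local notation "π" => algebraMap K[X] (RatFunc K)

theorem val_algebraMap_eq_gaussVal_taylor
    (hw : ∀ f : K[X], w (π f) = vAlphaDelta v α δ f) (f : K[X]) :
    w (π f) = gaussVal v δ (taylor α f) := by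
  rw [hw, taylor_apply]; rfl

theorem val_algebraMap_comp_X_sub_C
    (hw : ∀ f : K[X], w (π f) = vAlphaDelta v α δ f) (p : K[X]) :
    w (π (p.comp (X - C α))) = gaussVal v δ p := by
  rw [val_algebraMap_eq_gaussVal_taylor hw, taylor_apply, comp_assoc]
  simp

theorem val_algebraMap_C
    (hw : ∀ f : K[X], w (π f) = vAlphaDelta v α δ f) (b : K) : w (π (C b)) = v b := by
  have h := val_algebraMap_comp_X_sub_C hw (C b * X ^ 0)
  rwa [gaussVal_C_mul_X_pow, pow_zero, mul_one, C_comp, zero_smul, WithTop.coe_zero,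
    add_zero] at h

theorem val_algebraMap_X_sub_C_pow
    (hw : ∀ f : K[X], w (π f) = vAlphaDelta v α δ f) (k : ℕ) :
    w (π ((X - C α) ^ k)) = ((k • δ : Γ) : WithTop Γ) := by
  have h := val_algebraMap_comp_X_sub_C hw (C 1 * X ^ k)
  rwa [gaussVal_C_mul_X_pow, v.map_one, zero_add, C_1, one_mul, pow_comp, X_comp] at h

theorem exists_val_sub_algebraMap_C_pos
    (hw : ∀ f : K[X], w (π f) = vAlphaDelta v α δ f)
    (hδ : ∀ n : ℕ, 0 < n → ∀ x : K, x ≠ 0 → v x ≠ ((n • δ : Γ) : WithTop Γ))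
    {φ : RatFunc K} (hφ : w φ = 0) : ∃ c : K, v c = 0 ∧ 0 < w (φ - π (C c)) := by
  have hφ0 : φ ≠ 0 := by rintro rfl; simp at hφ
  have hg : π φ.denom ≠ 0 := RatFunc.algebraMap_ne_zero φ.denom_ne_zero
  have hfg : π φ.num = φ * π φ.denom := (div_eq_iff hg).mp φ.num_div_denom
  set F := taylor α φ.num
  set G := taylor α φ.denom
  have hF : F ≠ 0 := by simpa [F] using RatFunc.num_ne_zero hφ0
  have hG : G ≠ 0 := by simpa [G] using φ.denom_ne_zero
  have hvG : w (π φ.denom) = gaussVal v δ G := val_algebraMap_eq_gaussVal_taylor hw _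
  have hFG : gaussVal v δ F = gaussVal v δ G := by
    rw [← val_algebraMap_eq_gaussVal_taylor hw, hfg, w.map_mul, hφ, zero_add, hvG]
  obtain ⟨c, hc, hlt⟩ := exists_gaussVal_lt_gaussVal_sub hδ hF hG hFG
  refine ⟨c, hc, (WithTop.add_lt_add_iff_right (gaussVal_ne_top v δ hG)).mp ?_⟩
  calc 0 + gaussVal v δ G = gaussVal v δ F := by rw [zero_add, hFG]
    _ < gaussVal v δ (F - C c * G) := hlt
    _ = w (π (φ.num - C c * φ.denom)) := by
      rw [val_algebraMap_eq_gaussVal_taylor hw, map_sub, taylor_mul, taylor_C]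
    _ = w (φ - π (C c)) + gaussVal v δ G := by
      rw [map_sub, map_mul, hfg, ← hvG, ← w.map_mul]; congr 1; ring

theorem val_X_sub_C_pow_div_C (hw : ∀ f : K[X], w (π f) = vAlphaDelta v α δ f) {n : ℕ} {x : K}
    (hvx : v x = ((n • δ : Γ) : WithTop Γ)) : w (π ((X - C α) ^ n) / π (C x)) = 0 := by
  rw [w.map_div, val_algebraMap_X_sub_C_pow hw, val_algebraMap_C hw, hvx,
    LinearOrderedAddCommGroupWithTop.sub_self_eq_zero_of_ne_top WithTop.coe_ne_top]

theorem val_monic_eval_X_sub_C_pow_div_C (hw : ∀ f : K[X], w (π f) = vAlphaDelta v α δ f)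
    {n : ℕ} (hn : 0 < n) {x : K} (hx : x ≠ 0) (hvx : v x = ((n • δ : Γ) : WithTop Γ)) (d : ℕ)
    {a : ℕ → K} (ha : ∀ i, 0 ≤ v (a i)) :
    w ((π ((X - C α) ^ n) / π (C x)) ^ d + ∑ i ∈ Finset.range d,
        π (C (a i)) * (π ((X - C α) ^ n) / π (C x)) ^ i) = 0 := by
  have hφ := val_X_sub_C_pow_div_C hw hvx
  set t := π ((X - C α) ^ n)
  set u := π (C x)
  have hu : u ≠ 0 := RatFunc.algebraMap_ne_zero (C_ne_zero.mpr hx)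
  have hwu : w (u ^ d) = (((n * d) • δ : Γ) : WithTop Γ) := by
    rw [w.map_pow, val_algebraMap_C hw, hvx, ← WithTop.coe_nsmul, smul_smul, mul_comm]
  refine le_antisymm ?_ ?_
  · set Q : K[X] := X ^ (n * d) + ∑ i ∈ Finset.range d, C (a i * x ^ (d - i)) * X ^ (n * i)
    have hQ : π (Q.comp (X - C α)) =
        t ^ d + ∑ i ∈ Finset.range d, π (C (a i)) * u ^ (d - i) * t ^ i := by
      simp only [Q, add_comp, sum_comp, mul_comp, C_comp, pow_comp, X_comp, map_add, map_sum,
        map_mul, map_pow, t, u, pow_mul]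
    have hwu_ne : w (u ^ d) ≠ ⊤ := hwu ▸ WithTop.coe_ne_top
    refine (WithTop.add_le_add_iff_right hwu_ne).mp ?_
    rw [← w.map_mul, add_sum_div_pow_mul_pow hu, ← hQ, val_algebraMap_comp_X_sub_C hw, zero_add,
      hwu]
    refine (gaussVal_le Q (n * d)).trans_eq ?_
    rw [coeff_X_pow_mul_add_sum_C_mul_X_pow_mul hn, v.map_one, zero_add]
  · refine le_trans (le_min ?_ (w.map_le_sum fun i _ => ?_)) (w.map_add _ _)
    · rw [w.map_pow, hφ, nsmul_zero]
    · rw [w.map_mul, w.map_pow, hφ, nsmul_zero, add_zero, val_algebraMap_C hw]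
      exact ha i

end RatFunc

end

/-- Let `α ∈ K` and `δ` an element of an ordered abelian group `Γ`
containing the value group of `v`, and let `w` be the valuation `v_{α,δ}` on `K(X)`.
Then the residue field of `V_{α,δ}` is transcendental over the residue field of `V`
(expressed: there is a `w`-unit whose residue satisfies no monic polynomial with
coefficients coming from `V`) if and only if `n • δ ∈ Γ_v` for some `n ≥ 1`. -/
theorem stmt6 {K : Type*} [Field K] {Γ : Type*} [AddCommGroup Γ] [LinearOrder Γ] [IsOrderedAddMonoid Γ]
    (v : AddValuation K (WithTop Γ)) (α : K) (δ : Γ)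
    (w : AddValuation (RatFunc K) (WithTop Γ))
    (hw : ∀ f : Polynomial K,
      w (algebraMap (Polynomial K) (RatFunc K) f) = vAlphaDelta v α δ f) :
    (∃ φ : RatFunc K, w φ = 0 ∧ ∀ d : ℕ, 0 < d → ∀ a : ℕ → K, (∀ i, 0 ≤ v (a i)) →
        w (φ ^ d + ∑ i ∈ Finset.range d,
            algebraMap (Polynomial K) (RatFunc K) (C (a i)) * φ ^ i) = 0) ↔
      (∃ n : ℕ, 0 < n ∧ ∃ x : K, x ≠ 0 ∧ v x = ((n • δ : Γ) : WithTop Γ)) := by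
  constructor
  · rintro ⟨φ, hφ, hmonic⟩
    by_contra! hδ
    obtain ⟨c, hc, hpos⟩ := exists_val_sub_algebraMap_C_pos hw hδ hφ
    have h := hmonic 1 one_pos (fun _ => -c) fun _ => by rw [v.map_neg, hc]
    rw [pow_one, Finset.sum_range_one, pow_zero, mul_one, map_neg, map_neg, ← sub_eq_add_neg] at h
    exact hpos.ne' h
  · rintro ⟨n, hn, x, hx, hvx⟩
    exact ⟨_, val_X_sub_C_pow_div_C hw hvx,
      fun d _ _ ha => val_monic_eval_X_sub_C_pow_div_C hw hn hx hvx d ha⟩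
end

section
/- Let V be a rank one valuation domain with quotient field K, F a finite field extension of K, W a valuation domain of F lying over V, and (α, γ) ∈ F × Γ_w. If S ⊆ V satisfies Int(S, V) ⊆ W_{α,γ} ∩ K(X), then Int(S, W) ⊆ W_{α,γ}. -/
/-!
An `ε`-approximate Newton interpolation. The set `S` is infinite: a nonzero `p ∈ K[X]` vanishing
on `S` would put every `a p`, `a ∈ K`, into `Int(S, V)`, while `w` takes arbitrarily negative
values on `K`. So for every `ε > 0` there are nodes `s₀, s₁, … ∈ S` and `d₀, d₁, … ∈ K` with
`w(d_k) ≤ w(∏_{j<k} (t - s_j))` for all `t ∈ S` and `w(∏_{j<k} (s_k - s_j)) ≤ w(d_k) + ε`.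
Then `∏_{j<k} (X - s_j) / d_k ∈ Int(S, V)`, whence `w_{α,γ}(∏_{j<k} (X - s_j)) ≥ w(d_k)`.
Writing `g = Σ_k b_k ∏_{j<k} (X - s_j)` and evaluating at the nodes, a triangular induction
gives `w(b_k) + w(d_k) ≥ -(k+1)ε`, hence `w_{α,γ}(g) ≥ -(deg g + 1)ε` for every `ε > 0`.
-/

open Polynomial

/-- The valuation `w_{α,γ}` on polynomials over `F`: writing `g = Σ aᵢ (X - α)^i`,
`w_{α,γ} g = min_i (w aᵢ + i·γ)`. -/
noncomputable def wAlphaGamma {F : Type*} [Field F] (w : AddValuation F (WithTop ℝ))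
    (α : F) (γ : ℝ) (g : Polynomial F) : WithTop ℝ :=
  (g.comp (X + C α)).support.inf
    (fun i => w ((g.comp (X + C α)).coeff i) + (((i : ℝ) * γ : ℝ) : WithTop ℝ))

open Finset

section WAlphaGamma

variable {F : Type*} [Field F] (w : AddValuation F (WithTop ℝ)) (α : F) (γ : ℝ)

theorem le_wAlphaGamma_iff {c : WithTop ℝ} {g : F[X]} :
    c ≤ wAlphaGamma w α γ g ↔
      ∀ i : ℕ, c ≤ w ((g.comp (X + C α)).coeff i) + (((i : ℝ) * γ : ℝ) : WithTop ℝ) := by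
  refine Finset.le_inf_iff.trans ⟨fun h i => ?_, fun h i _ => h i⟩
  by_cases hi : i ∈ (g.comp (X + C α)).support
  · exact h i hi
  · rw [notMem_support_iff.mp hi, w.map_zero, top_add]
    exact le_top

theorem wAlphaGamma_le (g : F[X]) (i : ℕ) :
    wAlphaGamma w α γ g ≤ w ((g.comp (X + C α)).coeff i) + (((i : ℝ) * γ : ℝ) : WithTop ℝ) :=
  (le_wAlphaGamma_iff w α γ).1 le_rfl i

@[simp]
theorem wAlphaGamma_zero : wAlphaGamma w α γ 0 = ⊤ := by
  simp [wAlphaGamma]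

theorem wAlphaGamma_ne_top {g : F[X]} (hg : g ≠ 0) : wAlphaGamma w α γ g ≠ ⊤ := by
  obtain ⟨i, hi⟩ := nonempty_support_iff.2 (comp_X_add_C_ne_zero_iff.2 hg)
  refine ne_top_of_le_ne_top ?_ (wAlphaGamma_le w α γ g i)
  exact WithTop.add_ne_top.2 ⟨w.ne_top_iff.2 (mem_support_iff.1 hi), WithTop.coe_ne_top⟩

theorem add_le_wAlphaGamma_C_mul (a : F) (g : F[X]) :
    w a + wAlphaGamma w α γ g ≤ wAlphaGamma w α γ (C a * g) := by
  rw [le_wAlphaGamma_iff]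
  intro i
  rw [mul_comp, C_comp, coeff_C_mul, w.map_mul, add_assoc]
  exact add_le_add le_rfl (wAlphaGamma_le w α γ g i)

theorem wAlphaGamma_C_mul (a : F) (g : F[X]) :
    wAlphaGamma w α γ (C a * g) = w a + wAlphaGamma w α γ g := by
  rcases eq_or_ne a 0 with rfl | ha
  · simp
  refine le_antisymm ?_ (add_le_wAlphaGamma_C_mul w α γ a g)
  calc wAlphaGamma w α γ (C a * g)
      = w a + w a⁻¹ + wAlphaGamma w α γ (C a * g) := by
        rw [← w.map_mul, mul_inv_cancel₀ ha, w.map_one, zero_add]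
    _ ≤ w a + wAlphaGamma w α γ (C a⁻¹ * (C a * g)) :=
        add_assoc (w a) _ _ ▸ add_le_add le_rfl (add_le_wAlphaGamma_C_mul w α γ _ _)
    _ = w a + wAlphaGamma w α γ g := by
        rw [← mul_assoc, ← C_mul, inv_mul_cancel₀ ha, C_1, one_mul]

theorem min_le_wAlphaGamma_add (f g : F[X]) :
    min (wAlphaGamma w α γ f) (wAlphaGamma w α γ g) ≤ wAlphaGamma w α γ (f + g) := by
  rw [le_wAlphaGamma_iff]
  intro i
  rw [add_comp, coeff_add]
  calc min (wAlphaGamma w α γ f) (wAlphaGamma w α γ g)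
      ≤ min (w ((f.comp (X + C α)).coeff i) + (((i : ℝ) * γ : ℝ) : WithTop ℝ))
          (w ((g.comp (X + C α)).coeff i) + (((i : ℝ) * γ : ℝ) : WithTop ℝ)) :=
        min_le_min (wAlphaGamma_le w α γ f i) (wAlphaGamma_le w α γ g i)
    _ = min (w ((f.comp (X + C α)).coeff i)) (w ((g.comp (X + C α)).coeff i)) +
          (((i : ℝ) * γ : ℝ) : WithTop ℝ) := min_add_add_right _ _ _
    _ ≤ _ := add_le_add (w.map_add _ _) le_rfl

theorem le_wAlphaGamma_sum {ι : Type*} (s : Finset ι) (f : ι → F[X]) {c : WithTop ℝ}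
    (h : ∀ i ∈ s, c ≤ wAlphaGamma w α γ (f i)) : c ≤ wAlphaGamma w α γ (∑ i ∈ s, f i) :=
  Finset.sum_induction f (fun g => c ≤ wAlphaGamma w α γ g)
    (fun _ _ hf hg => (le_min hf hg).trans (min_le_wAlphaGamma_add w α γ _ _))
    (by simp) h

end WAlphaGamma

theorem WithTop.nonneg_of_forall_neg_le {x : WithTop ℝ}
    (h : ∀ ε : ℝ, 0 < ε → ((-ε : ℝ) : WithTop ℝ) ≤ x) : 0 ≤ x := by
  induction x using WithTop.recTopCoe with
  | top => exact le_top
  | coe x =>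
    refine WithTop.coe_nonneg.2 (le_of_forall_pos_le_add fun ε hε => ?_)
    have := WithTop.coe_le_coe.1 (h ε hε)
    linarith

section Extension

variable {K F : Type*} [Field K] [Field F] [Algebra K F] (w : AddValuation F (WithTop ℝ))

theorem exists_algebraMap_val_neg [FiniteDimensional K F] {π : F} (hπ : 0 < w π)
    (hπ' : w π ≠ ⊤) : ∃ a : K, w (algebraMap K F a) < 0 := by
  by_contra! hK
  have : Valuation.IsTrivialOn K w.toValuation :=
    Valuation.IsTrivialOn.of_le_one _ fun a => Multiplicative.toAdd_le.mp (hK a)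
  exact Valuation.transcendental_of_ne_one (v := w.toValuation) K π (w.ne_top_iff.1 hπ')
    hπ.ne' (Algebra.IsAlgebraic.isAlgebraic π)

theorem exists_algebraMap_val_lt_of_neg {a : K} (ha : w (algebraMap K F a) < 0) (r : ℝ) :
    ∃ b : K, w (algebraMap K F b) < r := by
  obtain ⟨x, hx⟩ := WithTop.ne_top_iff_exists.1 ha.ne_top
  have hx0 : x < 0 := by rw [← hx] at ha; exact_mod_cast ha
  obtain ⟨m, hm⟩ := exists_nat_gt (r / x)
  refine ⟨a ^ m, ?_⟩
  rw [map_pow, w.map_pow, ← hx, ← WithTop.coe_nsmul, nsmul_eq_mul, WithTop.coe_lt_coe]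
  exact (div_lt_iff_of_neg hx0).1 hm

variable (α : F) (γ : ℝ) {S : Set K}

theorem infinite_of_forall_nonneg_wAlphaGamma (hw : ∀ r : ℝ, ∃ a : K, w (algebraMap K F a) < r)
    (h : ∀ f : K[X], (∀ s ∈ S, 0 ≤ w (algebraMap K F (f.eval s))) →
      0 ≤ wAlphaGamma w α γ (f.map (algebraMap K F))) :
    S.Infinite := by
  intro hfin
  let p : K[X] := ∏ s ∈ hfin.toFinset, (X - C s)
  have hp : p.map (algebraMap K F) ≠ 0 :=
    ((monic_prod_of_monic _ _ fun s _ => monic_X_sub_C s).map _).ne_zero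
  obtain ⟨r, hr⟩ := WithTop.ne_top_iff_exists.1 (wAlphaGamma_ne_top w α γ hp)
  obtain ⟨a, ha⟩ := hw (-r)
  obtain ⟨x, hx⟩ := WithTop.ne_top_iff_exists.1 ha.ne_top
  have hCp : ∀ s ∈ S, 0 ≤ w (algebraMap K F ((C a * p).eval s)) := fun s hs => by
    rw [eval_mul, eval_prod, prod_eq_zero (hfin.mem_toFinset.2 hs) (by simp), mul_zero,
      map_zero, w.map_zero]
    exact le_top
  have := h _ hCp
  rw [Polynomial.map_mul, map_C, wAlphaGamma_C_mul, ← hr, ← hx] at this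
  rw [← hx] at ha
  norm_cast at this ha
  linarith

end Extension

theorem exists_mem_two_mul_sub_le {T : Set ℝ} (hne : T.Nonempty) (hbdd : BddBelow T)
    {ε : ℝ} (hε : 0 < ε) : ∃ x ∈ T, ∃ y ∈ T, x ≤ y + ε ∧ ∀ t ∈ T, 2 * y - x ≤ t := by
  by_cases hm : sInf T ∈ T
  · exact ⟨_, hm, _, hm, by linarith, fun t ht => by linarith [csInf_le hbdd ht]⟩
  obtain ⟨x, hxT, hx⟩ := Real.lt_sInf_add_pos hne hε
  have hmx : sInf T < x := (csInf_le hbdd hxT).lt_of_ne fun h => hm (h ▸ hxT)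
  obtain ⟨y, hyT, hy⟩ := Real.lt_sInf_add_pos hne (half_pos (sub_pos.2 hmx))
  exact ⟨x, hxT, y, hyT, by linarith [csInf_le hbdd hyT],
    fun t ht => by linarith [csInf_le hbdd ht]⟩

section Nodes

variable {K : Type*} [Field K]

noncomputable def nodePoly (s : ℕ → K) (k : ℕ) : K[X] := ∏ j ∈ range k, (X - C (s j))

theorem nodePoly_monic (s : ℕ → K) (k : ℕ) : (nodePoly s k).Monic :=
  monic_prod_of_monic _ _ fun j _ => monic_X_sub_C (s j)

theorem natDegree_nodePoly (s : ℕ → K) (k : ℕ) : (nodePoly s k).natDegree = k := by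
  rw [nodePoly, natDegree_prod_of_monic _ _ fun j _ => monic_X_sub_C (s j)]
  simp

theorem eval_nodePoly (s : ℕ → K) (k : ℕ) (t : K) :
    (nodePoly s k).eval t = ∏ j ∈ range k, (t - s j) := by
  simp [nodePoly, eval_prod]

theorem eval_nodePoly_of_lt (s : ℕ → K) {i k : ℕ} (h : i < k) : (nodePoly s k).eval (s i) = 0 := by
  rw [eval_nodePoly]
  exact prod_eq_zero (mem_range.2 h) (sub_self _)

theorem nodePoly_congr {s s' : ℕ → K} {k : ℕ} (h : ∀ j < k, s j = s' j) :
    nodePoly s k = nodePoly s' k :=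
  prod_congr rfl fun j hj => by rw [h j (mem_range.1 hj)]

variable (v : AddValuation K (WithTop ℝ)) (S : Set K) (ε : ℝ)

/-- The lower bound of `v ∘ p` on `S` is the value of an element `d` of `K`, so that `p / d` is
integer-valued on `S`. -/
def IsAlmostMinimizer (p : K[X]) (t d : K) : Prop :=
  t ∈ S ∧ d ≠ 0 ∧ (∀ u ∈ S, v d ≤ v (p.eval u)) ∧ v (p.eval t) ≤ v d + (ε : WithTop ℝ)

variable {S ε}

/-- When the infimum `m` of `v ∘ p` on `S` is not attained, `v ∘ p` need not take a value in
`[m - ε, m]`; but for values `x > y` of `v ∘ p` close enough to `m`, `p(t_y)² / p(t_x)` has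
value `2y - x ∈ [y - ε, m]`. -/
theorem exists_isAlmostMinimizer {p : K[X]} (hp : ∀ t ∈ S, 0 ≤ v (p.eval t))
    (hne : ∃ t ∈ S, p.eval t ≠ 0) (hε : 0 < ε) : ∃ t d, IsAlmostMinimizer v S ε p t d := by
  let T : Set ℝ := {r | ∃ t ∈ S, v (p.eval t) = r}
  have hT : ∀ t ∈ S, p.eval t ≠ 0 → ∃ r ∈ T, v (p.eval t) = r := fun t ht h0 =>
    let ⟨r, hr⟩ := WithTop.ne_top_iff_exists.1 (v.ne_top_iff.2 h0)
    ⟨r, ⟨t, ht, hr.symm⟩, hr.symm⟩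
  obtain ⟨t₀, ht₀, hp₀⟩ := hne
  have hbdd : BddBelow T := ⟨0, fun r ⟨t, ht, hr⟩ => by
    have := hp t ht
    rwa [hr, WithTop.coe_nonneg] at this⟩
  obtain ⟨x, ⟨tx, -, hx⟩, y, ⟨ty, hty, hy⟩, hxy, hmin⟩ :=
    exists_mem_two_mul_sub_le ((hT t₀ ht₀ hp₀).imp fun _ h => h.1) hbdd hε
  have hdx : p.eval tx ≠ 0 := fun h => by simp [h] at hx
  have hdy : p.eval ty ≠ 0 := fun h => by simp [h] at hy
  have hd : v (p.eval ty ^ 2 / p.eval tx) = ((2 * y - x : ℝ) : WithTop ℝ) := by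
    rw [v.map_div, v.map_pow, hy, hx]
    norm_cast
    rw [two_nsmul, two_mul]
  refine ⟨ty, p.eval ty ^ 2 / p.eval tx, hty, div_ne_zero (pow_ne_zero 2 hdy) hdx,
    fun u hu => ?_, ?_⟩
  · by_cases hu0 : p.eval u = 0
    · simp [hu0]
    obtain ⟨r, hrT, hr⟩ := hT u hu hu0
    rw [hd, hr]
    exact_mod_cast hmin r hrT
  · rw [hd, hy]
    exact_mod_cast (by linarith : y ≤ 2 * y - x + ε)

theorem exists_almostMinimizing_nodes (hS : ∀ s ∈ S, 0 ≤ v s) (hinf : S.Infinite) (hε : 0 < ε)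
    (n : ℕ) : ∃ s d : ℕ → K, ∀ k < n, IsAlmostMinimizer v S ε (nodePoly s k) (s k) (d k) := by
  induction n with
  | zero => exact ⟨0, 0, fun k hk => absurd hk k.not_lt_zero⟩
  | succ n ih =>
    obtain ⟨s, d, hsd⟩ := ih
    have hp : ∀ t ∈ S, 0 ≤ v ((nodePoly s n).eval t) := fun t ht => by
      rw [eval_nodePoly]
      refine prod_induction _ (fun x => 0 ≤ v x)
        (fun a b ha hb => by rw [v.map_mul]; exact add_nonneg ha hb) (by rw [v.map_one])
        fun j hj => v.map_le_sub (hS t ht) (hS _ (hsd j (mem_range.1 hj)).1)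
    have hne : ∃ t ∈ S, (nodePoly s n).eval t ≠ 0 := by
      classical
      obtain ⟨t, ht, hnot⟩ := hinf.exists_notMem_finset ((range n).image s)
      refine ⟨t, ht, ?_⟩
      rw [eval_nodePoly, prod_ne_zero_iff]
      exact fun j hj h => hnot (mem_image.2 ⟨j, hj, (sub_eq_zero.1 h).symm⟩)
    obtain ⟨t, e, hte⟩ := exists_isAlmostMinimizer v hp hne hε
    refine ⟨Function.update s n t, Function.update d n e, fun k hk => ?_⟩
    rw [nodePoly_congr fun j hj => Function.update_of_ne (by omega) t s]
    rcases Nat.lt_succ_iff_lt_or_eq.1 hk with hk | rfl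
    · rw [Function.update_of_ne hk.ne, Function.update_of_ne hk.ne]
      exact hsd k hk
    · rw [Function.update_self, Function.update_self]
      exact hte

end Nodes

theorem exists_eq_sum_C_mul_of_monic {R : Type*} [CommRing R] (p : ℕ → R[X])
    (hmonic : ∀ k, (p k).Monic) (hdeg : ∀ k, (p k).natDegree = k) (n : ℕ) (g : R[X])
    (hg : g.natDegree ≤ n) : ∃ b : ℕ → R, g = ∑ k ∈ range (n + 1), C (b k) * p k := by
  induction n generalizing g with
  | zero =>
    refine ⟨fun _ => g.coeff 0, ?_⟩
    rw [sum_range_one, (hmonic 0).natDegree_eq_zero.1 (hdeg 0), mul_one]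
    exact eq_C_of_natDegree_le_zero hg
  | succ n ih =>
    set c := g.coeff (n + 1)
    have hlead : (p (n + 1)).coeff (n + 1) = 1 := by
      simpa [hdeg] using (hmonic (n + 1)).coeff_natDegree
    have hg' : (g - C c * p (n + 1)).natDegree ≤ n := by
      refine natDegree_le_iff_coeff_eq_zero.2 fun m hm => ?_
      rw [coeff_sub, coeff_C_mul]
      rcases (Nat.succ_le_of_lt (Nat.cast_lt.1 hm)).eq_or_lt with rfl | hm'
      · rw [hlead, mul_one, sub_self]
      · rw [coeff_eq_zero_of_natDegree_lt (hg.trans_lt hm'),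
          coeff_eq_zero_of_natDegree_lt ((hdeg _).trans_lt hm'), mul_zero, sub_zero]
    obtain ⟨b, hb⟩ := ih _ hg'
    refine ⟨Function.update b (n + 1) c, ?_⟩
    rw [sum_range_succ, Function.update_self, ← sub_eq_iff_eq_add, hb]
    exact sum_congr rfl fun k hk => by
      rw [Function.update_of_ne (mem_range.1 hk).ne]

section Newton

variable {K F : Type*} [Field K] [Field F] [Algebra K F] (w : AddValuation F (WithTop ℝ))
  (α : F) (γ : ℝ) {S : Set K}

theorem le_wAlphaGamma_map_of_forall_le
    (h : ∀ f : K[X], (∀ s ∈ S, 0 ≤ w (algebraMap K F (f.eval s))) →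
      0 ≤ wAlphaGamma w α γ (f.map (algebraMap K F)))
    {p : K[X]} {d : K} (hd : d ≠ 0)
    (hp : ∀ t ∈ S, w (algebraMap K F d) ≤ w (algebraMap K F (p.eval t))) :
    w (algebraMap K F d) ≤ wAlphaGamma w α γ (p.map (algebraMap K F)) := by
  have hint : ∀ t ∈ S, 0 ≤ w (algebraMap K F ((C d⁻¹ * p).eval t)) := fun t ht => by
    rw [eval_mul, eval_C, map_mul, w.map_mul]
    calc 0 = w (algebraMap K F d⁻¹) + w (algebraMap K F d) := by
          rw [← w.map_mul, ← map_mul, inv_mul_cancel₀ hd, map_one, w.map_one]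
      _ ≤ _ := add_le_add le_rfl (hp t ht)
  have hp' : p.map (algebraMap K F) = C (algebraMap K F d) * (C d⁻¹ * p).map (algebraMap K F) := by
    rw [Polynomial.map_mul, map_C, ← mul_assoc, ← C_mul, ← map_mul, mul_inv_cancel₀ hd, map_one,
      C_1, one_mul]
  rw [hp', wAlphaGamma_C_mul]
  simpa using add_le_add (le_refl (w (algebraMap K F d))) (h _ hint)

variable {ε : ℝ} {s d : ℕ → K} {n : ℕ} {g : F[X]} {b : ℕ → F}

theorem neg_le_val_newtonCoeff (hε : 0 ≤ ε)
    (hnodes : ∀ k < n + 1,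
      IsAlmostMinimizer (w.comap (algebraMap K F)) S ε (nodePoly s k) (s k) (d k))
    (hg : ∀ t ∈ S, 0 ≤ w (g.eval (algebraMap K F t)))
    (hb : g = ∑ k ∈ range (n + 1), C (b k) * (nodePoly s k).map (algebraMap K F)) :
    ∀ i < n + 1, ((-((i + 1) * ε) : ℝ) : WithTop ℝ) ≤ w (b i) + w (algebraMap K F (d i)) := by
  intro i
  induction i using Nat.strong_induction_on with
  | _ i ih =>
    intro hi
    obtain ⟨hsi, -, -, hslack⟩ := hnodes i hi
    have hval : g.eval (algebraMap K F (s i)) =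
        ∑ k ∈ range (i + 1), b k * algebraMap K F ((nodePoly s k).eval (s i)) := by
      rw [hb, eval_finsetSum]
      simp_rw [eval_mul, eval_C, eval_map, eval₂_at_apply]
      symm
      refine sum_subset (range_subset_range.2 (by omega : i + 1 ≤ n + 1)) fun k _ hk => ?_
      rw [eval_nodePoly_of_lt s (by simpa using hk), map_zero, mul_zero]
    rw [sum_range_succ] at hval
    have hterm : ((-(i * ε) : ℝ) : WithTop ℝ) ≤
        w (b i * algebraMap K F ((nodePoly s i).eval (s i))) := by
      rw [eq_sub_of_add_eq' hval.symm]
      refine w.map_le_sub ((WithTop.coe_le_coe.2 (by nlinarith)).trans (hg _ hsi))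
        (w.map_le_sum fun k hk => ?_)
      have hk := mem_range.1 hk
      have hki : (k + 1 : ℝ) ≤ i := by exact_mod_cast hk
      rw [w.map_mul]
      calc ((-(i * ε) : ℝ) : WithTop ℝ) ≤ ((-((k + 1) * ε) : ℝ) : WithTop ℝ) :=
            WithTop.coe_le_coe.2 (by nlinarith)
        _ ≤ w (b k) + w (algebraMap K F (d k)) := ih k hk (by omega)
        _ ≤ _ := add_le_add le_rfl ((hnodes k (by omega)).2.2.1 (s i) hsi)
    refine (WithTop.add_le_add_iff_right (WithTop.coe_ne_top (a := ε))).1 ?_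
    calc ((-((i + 1) * ε) : ℝ) : WithTop ℝ) + ε = ((-(i * ε) : ℝ) : WithTop ℝ) := by
          norm_cast
          push_cast
          ring
      _ ≤ w (b i) + w (algebraMap K F ((nodePoly s i).eval (s i))) := w.map_mul _ _ ▸ hterm
      _ ≤ w (b i) + (w (algebraMap K F (d i)) + ε) := add_le_add le_rfl hslack
      _ = _ := (add_assoc _ _ _).symm

theorem neg_le_wAlphaGamma_of_newton
    (h : ∀ f : K[X], (∀ s ∈ S, 0 ≤ w (algebraMap K F (f.eval s))) →
      0 ≤ wAlphaGamma w α γ (f.map (algebraMap K F)))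
    (hε : 0 ≤ ε)
    (hnodes : ∀ k < n + 1,
      IsAlmostMinimizer (w.comap (algebraMap K F)) S ε (nodePoly s k) (s k) (d k))
    (hg : ∀ t ∈ S, 0 ≤ w (g.eval (algebraMap K F t)))
    (hb : g = ∑ k ∈ range (n + 1), C (b k) * (nodePoly s k).map (algebraMap K F)) :
    ((-((n + 1) * ε) : ℝ) : WithTop ℝ) ≤ wAlphaGamma w α γ g := by
  rw [hb]
  refine le_wAlphaGamma_sum w α γ _ _ fun k hk => ?_
  have hk := mem_range.1 hk
  have hkn : (k : ℝ) ≤ n := by exact_mod_cast Nat.lt_succ_iff.1 hk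
  obtain ⟨-, hdk, hlow, -⟩ := hnodes k hk
  rw [wAlphaGamma_C_mul]
  calc ((-((n + 1) * ε) : ℝ) : WithTop ℝ) ≤ ((-((k + 1) * ε) : ℝ) : WithTop ℝ) :=
        WithTop.coe_le_coe.2 (by nlinarith)
    _ ≤ w (b k) + w (algebraMap K F (d k)) := neg_le_val_newtonCoeff w hε hnodes hg hb k hk
    _ ≤ _ := add_le_add le_rfl (le_wAlphaGamma_map_of_forall_le w α γ h hdk hlow)

end Newton

theorem stmt13_general {K F : Type*} [Field K] [Field F] [Algebra K F] [FiniteDimensional K F]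
    (w : AddValuation F (WithTop ℝ))
    (hrank : ∃ π : F, 0 < w π ∧ w π ≠ ⊤)
    (α : F) (γ : ℝ)
    (S : Set K) (hS : ∀ s ∈ S, 0 ≤ w (algebraMap K F s))
    (h : ∀ f : Polynomial K, (∀ s ∈ S, 0 ≤ w (algebraMap K F (f.eval s))) →
      0 ≤ wAlphaGamma w α γ (f.map (algebraMap K F))) :
    ∀ g : Polynomial F, (∀ s ∈ S, 0 ≤ w (g.eval (algebraMap K F s))) →
      0 ≤ wAlphaGamma w α γ g := by
  intro g hg
  obtain ⟨π, hπ, hπ'⟩ := hrank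
  obtain ⟨a, ha⟩ := exists_algebraMap_val_neg (K := K) w hπ hπ'
  have hinf : S.Infinite :=
    infinite_of_forall_nonneg_wAlphaGamma w α γ (exists_algebraMap_val_lt_of_neg w ha) h
  refine WithTop.nonneg_of_forall_neg_le fun ε hε => ?_
  set n := g.natDegree
  have hε' : 0 < ε / (n + 1) := by positivity
  obtain ⟨s, d, hnodes⟩ :=
    exists_almostMinimizing_nodes (w.comap (algebraMap K F)) hS hinf hε' (n + 1)
  obtain ⟨b, hb⟩ := exists_eq_sum_C_mul_of_monic (fun k => (nodePoly s k).map (algebraMap K F))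
    (fun k => (nodePoly_monic s k).map _)
    (fun k => by rw [(nodePoly_monic s k).natDegree_map, natDegree_nodePoly]) n g le_rfl
  calc ((-ε : ℝ) : WithTop ℝ) = ((-((n + 1) * (ε / (n + 1))) : ℝ) : WithTop ℝ) := by
        rw [mul_div_cancel₀ _ (by positivity)]
    _ ≤ wAlphaGamma w α γ g := neg_le_wAlphaGamma_of_newton w α γ h hε'.le hnodes hg hb

/-- Let `V` be a rank-one valuation domain of `K`, `F/K` a finite
extension, `W` (with valuation `w`) a valuation domain of `F` lying over `V`, and
`(α, γ) ∈ F × Γ_w`.  If `S ⊆ V` and `Int(S, V) ⊆ W_{α,γ} ∩ K(X)`, then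
`Int(S, W) ⊆ W_{α,γ}`. -/
theorem stmt13 {K F : Type*} [Field K] [Field F] [Algebra K F] [FiniteDimensional K F]
    (w : AddValuation F (WithTop ℝ))
    (hrank : ∃ π : F, 0 < w π ∧ w π ≠ ⊤)
    (α : F) (γ : ℝ) (hγ : ∃ x : F, x ≠ 0 ∧ w x = (γ : WithTop ℝ))
    (S : Set K) (hS : ∀ s ∈ S, 0 ≤ w (algebraMap K F s))
    (h : ∀ f : Polynomial K, (∀ s ∈ S, 0 ≤ w (algebraMap K F (f.eval s))) →
      0 ≤ wAlphaGamma w α γ (f.map (algebraMap K F))) :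
    ∀ g : Polynomial F, (∀ s ∈ S, 0 ≤ w (g.eval (algebraMap K F s))) →
      0 ≤ wAlphaGamma w α γ g :=
  stmt13_general w hrank α γ S hS h
end

section
/- Let V be a rank one valuation domain, α ∈ K, γ ∈ ℝ. Then V[(X-α)/γ] := {Σ_k a_k(X-α)^k ∈ K[X] : v(a_k) + kγ ≥ 0 for all k} is contained in Int(B(α,γ), V). Moreover, if S ⊆ V satisfies Int(S, V) ⊆ V_{α,γ}, then the closed ball B(α, γ) is contained in the polynomial closure of S. -/
open Polynomial

/-! Expanding `f` around `α`, each term `aᵢ (x - α)^i` has valuation at least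
`v aᵢ + iγ ≥ 0` when `v (x - α) ≥ γ`, so the ultrametric inequality gives `v (f x) ≥ 0`.
The second part follows because `Int(S, V) ⊆ V[(X-α)/γ] ⊆ Int(B(α,γ), V)`. -/

/-- The valuation `v_{α,γ}` on polynomials: writing `f = Σ aᵢ (X - α)^i`,
`v_{α,γ} f = min_i (v aᵢ + i·γ)`; the ring `V[(X-α)/γ] = V_{α,γ} ∩ K[X]` is the set
of polynomials with `0 ≤ v_{α,γ} f`. -/
noncomputable def vAlphaGamma {K : Type*} [Field K] (v : AddValuation K (WithTop ℝ))
    (α : K) (γ : ℝ) (f : Polynomial K) : WithTop ℝ :=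
  (f.comp (X + C α)).support.inf
    (fun i => v ((f.comp (X + C α)).coeff i) + (((i : ℝ) * γ : ℝ) : WithTop ℝ))

theorem AddValuation.eval_nonneg_of_coeff_bound {K : Type*} [Field K]
    (v : AddValuation K (WithTop ℝ)) (g : K[X]) (γ : ℝ)
    (hg : ∀ i ∈ g.support, 0 ≤ v (g.coeff i) + (((i : ℝ) * γ : ℝ) : WithTop ℝ))
    {y : K} (hy : (γ : WithTop ℝ) ≤ v y) : 0 ≤ v (g.eval y) := by
  rw [eval_eq_sum, Polynomial.sum]
  refine v.map_le_sum fun i hi => ?_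
  have hpow : (((i : ℝ) * γ : ℝ) : WithTop ℝ) ≤ v (y ^ i) := by
    rw [v.map_pow, ← nsmul_eq_mul, WithTop.coe_nsmul]
    exact nsmul_le_nsmul_right hy i
  calc (0 : WithTop ℝ) ≤ v (g.coeff i) + (((i : ℝ) * γ : ℝ) : WithTop ℝ) := hg i hi
    _ ≤ v (g.coeff i * y ^ i) := by rw [v.map_mul]; exact add_le_add_right hpow _

theorem vAlphaGamma_le {K : Type*} [Field K] (v : AddValuation K (WithTop ℝ))
    (α : K) (γ : ℝ) (f : K[X]) {i : ℕ} (hi : i ∈ (f.comp (X + C α)).support) :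
    vAlphaGamma v α γ f ≤
      v ((f.comp (X + C α)).coeff i) + (((i : ℝ) * γ : ℝ) : WithTop ℝ) :=
  Finset.inf_le hi

theorem eval_nonneg_of_vAlphaGamma_nonneg {K : Type*} [Field K]
    (v : AddValuation K (WithTop ℝ)) {α : K} {γ : ℝ} {f : K[X]}
    (hf : 0 ≤ vAlphaGamma v α γ f) {x : K} (hx : (γ : WithTop ℝ) ≤ v (x - α)) :
    0 ≤ v (f.eval x) := by
  have hshift : f.eval x = (f.comp (X + C α)).eval (x - α) := by simp [eval_comp]
  rw [hshift]
  exact v.eval_nonneg_of_coeff_bound _ γ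
    (fun i hi => hf.trans (vAlphaGamma_le v α γ f hi)) hx

theorem stmt15_general {K : Type*} [Field K] (v : AddValuation K (WithTop ℝ))
    (α : K) (γ : ℝ) :
    (∀ f : Polynomial K, 0 ≤ vAlphaGamma v α γ f →
      ∀ x : K, (γ : WithTop ℝ) ≤ v (x - α) → 0 ≤ v (f.eval x)) ∧
    (∀ S : Set K, (∀ s ∈ S, 0 ≤ v s) →
      (∀ f : Polynomial K, (∀ s ∈ S, 0 ≤ v (f.eval s)) → 0 ≤ vAlphaGamma v α γ f) →
      ∀ x : K, (γ : WithTop ℝ) ≤ v (x - α) →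
        ∀ f : Polynomial K, (∀ s ∈ S, 0 ≤ v (f.eval s)) → 0 ≤ v (f.eval x)) :=
  ⟨fun _ hf _ hx => eval_nonneg_of_vAlphaGamma_nonneg v hf hx,
    fun _ _ hInt _ hx f hf => eval_nonneg_of_vAlphaGamma_nonneg v (hInt f hf) hx⟩

/-- For a rank-one valuation domain `V`, `α ∈ K`, `γ ∈ ℝ`:
`V[(X-α)/γ] ⊆ Int(B(α,γ), V)`; and if `S ⊆ V` satisfies `Int(S,V) ⊆ V_{α,γ}`,
then `B(α,γ)` is contained in the polynomial closure of `S`. -/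
theorem stmt15 {K : Type*} [Field K] (v : AddValuation K (WithTop ℝ))
    (hrank : ∃ π : K, 0 < v π ∧ v π ≠ ⊤) (α : K) (γ : ℝ) :
    (∀ f : Polynomial K, 0 ≤ vAlphaGamma v α γ f →
      ∀ x : K, (γ : WithTop ℝ) ≤ v (x - α) → 0 ≤ v (f.eval x)) ∧
    (∀ S : Set K, (∀ s ∈ S, 0 ≤ v s) →
      (∀ f : Polynomial K, (∀ s ∈ S, 0 ≤ v (f.eval s)) → 0 ≤ vAlphaGamma v α γ f) →
      ∀ x : K, (γ : WithTop ℝ) ≤ v (x - α) →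
        ∀ f : Polynomial K, (∀ s ∈ S, 0 ≤ v (f.eval s)) → 0 ≤ v (f.eval x)) :=
  stmt15_general v α γ
end

section
/- Let V be a rank one valuation domain, α ∈ V, γ ∈ Γ_v. If either V is not discrete or the residue field V/M is infinite, then the polynomial closure of the sphere ∂B(α, γ) = {x ∈ K : v(x - α) = γ} is the closed ball B(α, γ). If instead V is a DVR with finite residue field, then ∂B(α, γ) is polynomially closed. -/
/-!
The affine change of variables `x ↦ (x - α) / c` with `v c = γ` turns the sphere into the unit
group `{u | v u = 0}` and the ball into `V`, so only the unit sphere matters.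

If the value group is dense, a polynomial `f` of degree `n` that is integral on units has
coefficients of valuation at least `-n(n+1)s` for every small `s > 0`: interpolate `f` at the
units `1 + t ^ (j + 1)`, `v t = s`, whose pairwise differences have valuation at most `(n+1)s`.
If the residue field is infinite, divide `f` by a coefficient of least valuation and reduce
modulo `M`; the reduction is nonzero, hence has a non-root at some unit `w`, and then
`v (f w)` equals the least valuation of the coefficients. Either way `f` has integral
coefficients, so the closure of the unit sphere is `V`.

If `V` is a DVR with uniformiser `π` and residue field of `q` elements, then
`(X ^ (q - 1) - 1) / π` is integral on units but not at points of `M`.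
-/

open Polynomial

namespace AddValuation

variable {K : Type*} [Field K]

section Monoid

variable {Γ₀ : Type*} [LinearOrderedAddCommMonoidWithTop Γ₀] (v : AddValuation K Γ₀)

def polyClosure (S : Set K) : Set K :=
  {y | ∀ f : K[X], (∀ x ∈ S, 0 ≤ v (f.eval x)) → 0 ≤ v (f.eval y)}

theorem subset_polyClosure (S : Set K) : S ⊆ v.polyClosure S :=
  fun y hy _ hf => hf y hy

theorem nonneg_of_mem_polyClosure {S : Set K} (hS : ∀ x ∈ S, 0 ≤ v x) {y : K}
    (hy : y ∈ v.polyClosure S) : 0 ≤ v y := by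
  simpa using hy X (by simpa using hS)

theorem mem_polyClosure_preimage_affine_iff {a : K} (ha : a ≠ 0) (b : K) (S : Set K) (y : K) :
    y ∈ v.polyClosure ((fun x => a * (x - b)) ⁻¹' S) ↔ a * (y - b) ∈ v.polyClosure S := by
  constructor
  · intro hy f hf
    have h := hy (f.comp (C a * (X - C b))) fun x hx => by simpa using hf _ hx
    simp only [eval_comp, eval_mul, eval_C, eval_sub, eval_X] at h
    exact h
  · intro hy g hg
    have h := hy (g.comp (C a⁻¹ * X + C b)) fun z hz => by
      simpa using hg _ (by simpa [ha] using hz)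
    simpa [ha] using h

theorem zero_le_map_inv_mul_iff {c : K} (hc : c ≠ 0) (z : K) :
    0 ≤ v (c⁻¹ * z) ↔ v c ≤ v z := by
  constructor
  · intro h
    calc v c = v c + 0 := (add_zero _).symm
      _ ≤ v c + v (c⁻¹ * z) := by gcongr
      _ = v z := by rw [← v.map_mul, mul_inv_cancel_left₀ hc]
  · intro h
    calc (0 : Γ₀) = v c⁻¹ + v c := by rw [← v.map_mul, inv_mul_cancel₀ hc, v.map_one]
      _ ≤ v c⁻¹ + v z := by gcongr
      _ = v (c⁻¹ * z) := (v.map_mul _ _).symm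

theorem map_inv_mul_eq_zero_iff {c : K} (hc : c ≠ 0) (z : K) :
    v (c⁻¹ * z) = 0 ↔ v z = v c := by
  constructor
  · intro h
    rw [← mul_inv_cancel_left₀ hc z, v.map_mul, h, add_zero]
  · intro h
    rw [v.map_mul, h, ← v.map_mul, inv_mul_cancel₀ hc, v.map_one]

theorem eval_nonneg_of_coeff_nonneg {f : K[X]} (hf : ∀ i, 0 ≤ v (f.coeff i)) {x : K}
    (hx : 0 ≤ v x) : 0 ≤ v (f.eval x) := by
  rw [eval_eq_sum_range]
  refine v.map_le_sum fun i _ => ?_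
  rw [v.map_mul, v.map_pow]
  exact add_nonneg (hf i) (nsmul_nonneg hx i)

theorem polyClosure_unitSphere_eq_of_coeff_nonneg
    (h : ∀ f : K[X], (∀ u, v u = 0 → 0 ≤ v (f.eval u)) → ∀ i, 0 ≤ v (f.coeff i)) :
    v.polyClosure {u | v u = 0} = {u | 0 ≤ v u} := by
  ext y
  exact ⟨v.nonneg_of_mem_polyClosure fun x hx => hx.ge,
    fun hy f hf => v.eval_nonneg_of_coeff_nonneg (h f hf) hy⟩

theorem exists_coeff_min (f : K[X]) : ∃ i₀, ∀ i, v (f.coeff i₀) ≤ v (f.coeff i) := by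
  obtain ⟨i₀, -, hi₀⟩ := Finset.exists_min_image (Finset.range (f.natDegree + 1))
    (fun i => v (f.coeff i)) ⟨0, by simp⟩
  refine ⟨i₀, fun i => ?_⟩
  rcases le_or_gt i f.natDegree with hi | hi
  · exact hi₀ i (Finset.mem_range_succ_iff.2 hi)
  · simp [coeff_eq_zero_of_natDegree_lt hi]

theorem le_coeff_mul {p q : K[X]} {A B : Γ₀} (hp : ∀ i, A ≤ v (p.coeff i))
    (hq : ∀ i, B ≤ v (q.coeff i)) (i : ℕ) : A + B ≤ v ((p * q).coeff i) := by
  rw [coeff_mul]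
  refine v.map_le_sum fun x _ => ?_
  rw [v.map_mul]
  exact add_le_add (hp _) (hq _)

theorem le_coeff_prod {ι : Type*} (s : Finset ι) {p : ι → K[X]} {A : ι → Γ₀}
    (h : ∀ k ∈ s, ∀ i, A k ≤ v ((p k).coeff i)) (i : ℕ) :
    ∑ k ∈ s, A k ≤ v ((∏ k ∈ s, p k).coeff i) := by
  classical
  induction s using Finset.induction_on generalizing i with
  | empty => rcases i with _ | i <;> simp [coeff_one]
  | insert a s ha ih =>
    rw [Finset.prod_insert ha, Finset.sum_insert ha]
    exact v.le_coeff_mul (h a (Finset.mem_insert_self a s))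
      (ih fun k hk => h k (Finset.mem_insert_of_mem hk)) i

theorem map_inv_sub_le_coeff_basisDivisor (x : K) {y : K} (hy : 0 ≤ v y) (i : ℕ) :
    v (x - y)⁻¹ ≤ v ((Lagrange.basisDivisor x y).coeff i) := by
  rw [Lagrange.basisDivisor, coeff_C_mul, v.map_mul]
  refine le_add_of_nonneg_right ?_
  rcases i with _ | _ | i <;> simp [coeff_X, coeff_C, hy]

theorem map_eq_zero_of_notMem {V : Subring K} (hV : ∀ x : K, x ∈ V ↔ 0 ≤ v x) {M : Ideal V}
    (hM : ∀ x : V, x ∈ M ↔ 0 < v (x : K)) {x : V} (hx : x ∉ M) : v (x : K) = 0 :=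
  le_antisymm (not_lt.1 fun h => hx ((hM x).2 h)) ((hV _).1 x.2)

theorem isPrime_of_mem_iff {V : Subring K} (hV : ∀ x : K, x ∈ V ↔ 0 ≤ v x) {M : Ideal V}
    (hM : ∀ x : V, x ∈ M ↔ 0 < v (x : K)) : M.IsPrime := by
  refine ⟨(Ideal.ne_top_iff_one M).2 fun h => by simpa using (hM 1).1 h, fun {x y} hxy => ?_⟩
  by_contra! h
  have hxy0 : v ((x * y : V) : K) = 0 := by
    rw [Subring.coe_mul, v.map_mul, v.map_eq_zero_of_notMem hV hM h.1,
      v.map_eq_zero_of_notMem hV hM h.2, add_zero]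
  exact ((hM _).1 hxy).ne' hxy0

theorem exists_map_eval_eq_zero_of_infinite_quotient {V : Subring K}
    (hV : ∀ x : K, x ∈ V ↔ 0 ≤ v x) {M : Ideal V} (hM : ∀ x : V, x ∈ M ↔ 0 < v (x : K))
    [Infinite (V ⧸ M)] {g : K[X]}
    (hg : ∀ i, 0 ≤ v (g.coeff i)) {i₀ : ℕ} (hi₀ : v (g.coeff i₀) = 0) :
    ∃ w : K, v w = 0 ∧ v (g.eval w) = 0 := by
  have : M.IsPrime := v.isPrime_of_mem_iff hV hM
  have hsub : (g.coeffs : Set K) ⊆ V := fun x hx => by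
    obtain ⟨i, -, rfl⟩ := mem_coeffs_iff.1 hx
    exact (hV _).2 (hg i)
  set G : V[X] := g.toSubring V hsub
  have hG : G.map (Ideal.Quotient.mk M) ≠ 0 := by
    intro h
    have hc := congrArg (coeff · i₀) h
    simp only [coeff_map, coeff_zero, Ideal.Quotient.eq_zero_iff_mem, hM, G, coeff_toSubring,
      hi₀, lt_irrefl] at hc
  obtain ⟨z, hz⟩ :=
    ((finite_setOfPred_isRoot hG).union (Set.finite_singleton 0)).infinite_compl.nonempty
  obtain ⟨w, rfl⟩ := Ideal.Quotient.mk_surjective z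
  simp only [Set.mem_compl_iff, Set.mem_union, Set.mem_ofPred_eq, Set.mem_singleton_iff, not_or,
    IsRoot.def, eval_map, eval₂_at_apply, Ideal.Quotient.eq_zero_iff_mem] at hz
  have hGw : ((G.eval w : V) : K) = g.eval (w : K) := by
    conv_rhs => rw [← map_toSubring g V hsub]
    rw [eval_map, ← Subring.coe_subtype, eval₂_at_apply]
  exact ⟨w, v.map_eq_zero_of_notMem hV hM hz.2, hGw ▸ v.map_eq_zero_of_notMem hV hM hz.1⟩

theorem coeff_nonneg_of_infinite_quotient {V : Subring K} (hV : ∀ x : K, x ∈ V ↔ 0 ≤ v x)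
    {M : Ideal V} (hM : ∀ x : V, x ∈ M ↔ 0 < v (x : K)) [Infinite (V ⧸ M)] {f : K[X]}
    (hf : ∀ u, v u = 0 → 0 ≤ v (f.eval u)) (i : ℕ) : 0 ≤ v (f.coeff i) := by
  obtain ⟨i₀, hmin⟩ := v.exists_coeff_min f
  rcases eq_or_ne (f.coeff i₀) 0 with hd | hd
  · exact (hmin i).trans' (by simp [hd])
  obtain ⟨w, hw, hgw⟩ := v.exists_map_eval_eq_zero_of_infinite_quotient hV hM
    (g := C (f.coeff i₀)⁻¹ * f)
    (fun i => by rw [coeff_C_mul, v.zero_le_map_inv_mul_iff hd]; exact hmin i)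
    (i₀ := i₀) (by rw [coeff_C_mul, inv_mul_cancel₀ hd, v.map_one])
  rw [eval_mul, eval_C, v.map_inv_mul_eq_zero_iff hd] at hgw
  exact (hf w hw).trans (hgw ▸ hmin i)

end Monoid

section Group

variable {Γ₀ : Type*} [LinearOrderedAddCommGroupWithTop Γ₀] (v : AddValuation K Γ₀)

theorem map_pow_card_units_sub_one_pos {V : Subring K} (hV : ∀ x : K, x ∈ V ↔ 0 ≤ v x)
    {M : Ideal V} (hM : ∀ x : V, x ∈ M ↔ 0 < v (x : K)) {u : K} (hu : v u = 0) :
    0 < v (u ^ Nat.card (V ⧸ M)ˣ - 1) := by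
  have huV : u ∈ V := (hV u).2 hu.ge
  have hu0 : u ≠ 0 := by rintro rfl; simp at hu
  have hinvV : u⁻¹ ∈ V := (hV _).2 (by rw [v.map_inv, hu, neg_zero])
  have hunit : IsUnit (⟨u, huV⟩ : V) :=
    ⟨⟨⟨u, huV⟩, ⟨u⁻¹, hinvV⟩, Subtype.ext (mul_inv_cancel₀ hu0),
      Subtype.ext (inv_mul_cancel₀ hu0)⟩, rfl⟩
  obtain ⟨r, hr⟩ := hunit.map (Ideal.Quotient.mk M)
  have hmem : (⟨u, huV⟩ : V) ^ Nat.card (V ⧸ M)ˣ - 1 ∈ M := by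
    rw [← Ideal.Quotient.eq_zero_iff_mem, _root_.map_sub, _root_.map_pow, ← hr, _root_.map_one,
      ← Units.val_pow_eq_pow_val, pow_card_eq_one', Units.val_one, sub_self]
  simpa using (hM _).1 hmem

theorem polyClosure_unitSphere_eq_self {V : Subring K} (hV : ∀ x : K, x ∈ V ↔ 0 ≤ v x)
    {M : Ideal V} (hM : ∀ x : V, x ∈ M ↔ 0 < v (x : K)) [Finite (V ⧸ M)] {π : K} (hπ0 : π ≠ 0)
    (hπ : 0 < v π) (hmin : ∀ z, 0 < v z → v π ≤ v z) :
    v.polyClosure {u | v u = 0} = {u | v u = 0} := by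
  refine Set.Subset.antisymm (fun y hy => ?_) (v.subset_polyClosure _)
  have hy0 : 0 ≤ v y := v.nonneg_of_mem_polyClosure (fun x hx => hx.ge) hy
  refine (hy0.eq_or_lt.resolve_right fun hypos => ?_).symm
  set N := Nat.card (V ⧸ M)ˣ
  have hN : 0 < N := Nat.card_pos
  have hf := hy (C π⁻¹ * (X ^ N - 1)) fun u hu => by
    simp only [eval_mul, eval_C, eval_sub, eval_pow, eval_X, eval_one]
    rw [v.zero_le_map_inv_mul_iff hπ0]
    exact hmin _ (v.map_pow_card_units_sub_one_pos hV hM hu)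
  have hyN : v (y ^ N - 1) = 0 := by
    rw [v.map_sub_eq_of_lt_right, v.map_one]
    rwa [v.map_one, v.map_pow, nsmul_pos_iff hN.ne']
  simp only [eval_mul, eval_C, eval_sub, eval_pow, eval_X, eval_one,
    v.zero_le_map_inv_mul_iff hπ0, hyN] at hf
  exact hf.not_gt hπ

end Group

section Real

variable (v : AddValuation K (WithTop ℝ))

def valueGroup : AddSubgroup ℝ where
  carrier := {r | ∃ x, v x = r}
  add_mem' := by
    rintro _ _ ⟨x, hx⟩ ⟨y, hy⟩
    exact ⟨x * y, by rw [v.map_mul, hx, hy, WithTop.coe_add]⟩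
  zero_mem' := ⟨1, v.map_one⟩
  neg_mem' := by
    rintro _ ⟨x, hx⟩
    exact ⟨x⁻¹, by rw [v.map_inv, hx, WithTop.LinearOrderedAddCommGroup.coe_neg]⟩

theorem exists_eq_coe_of_ne_zero {x : K} (hx : x ≠ 0) : ∃ r : ℝ, v x = r := by
  obtain ⟨r, hr⟩ := WithTop.ne_top_iff_exists.1 (v.ne_top_iff.2 hx)
  exact ⟨r, hr.symm⟩

theorem exists_map_pos_lt_of_not_discrete
    (hnd : ¬ ∃ ρ : ℝ, 0 < ρ ∧ ∀ x : K, x ≠ 0 → ∃ n : ℤ, v x = (((n : ℝ) * ρ : ℝ) : WithTop ℝ))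
    {ε : ℝ} (hε : 0 < ε) : ∃ t : K, 0 < v t ∧ v t < ε := by
  by_contra! h
  apply hnd
  rcases eq_or_ne v.valueGroup ⊥ with hbot | hbot
  · refine ⟨1, one_pos, fun x hx => ⟨0, ?_⟩⟩
    obtain ⟨r, hr⟩ := v.exists_eq_coe_of_ne_zero hx
    have hr0 : r ∈ v.valueGroup := ⟨x, hr⟩
    rw [hbot, AddSubgroup.mem_bot] at hr0
    simp [hr, hr0]
  have hgap : Disjoint (v.valueGroup : Set ℝ) (Set.Ioo 0 ε) :=
    Set.disjoint_left.2 fun r ⟨x, hx⟩ hr =>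
      (h x (by rw [hx]; exact_mod_cast hr.1)).not_gt (by rw [hx]; exact_mod_cast hr.2)
  obtain ⟨a, hleast⟩ := AddSubgroup.exists_isLeast_pos hbot hε hgap
  have hcyc := AddSubgroup.cyclic_of_min hleast
  refine ⟨a, hleast.1.2, fun x hx => ?_⟩
  obtain ⟨r, hr⟩ := v.exists_eq_coe_of_ne_zero hx
  have hrS : r ∈ v.valueGroup := ⟨x, hr⟩
  rw [hcyc, AddSubgroup.mem_closure_singleton] at hrS
  obtain ⟨n, rfl⟩ := hrS
  exact ⟨n, by rw [hr, zsmul_eq_mul]⟩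

theorem exists_map_pos_le_of_discrete (hrank : ∃ π : K, 0 < v π ∧ v π ≠ ⊤)
    (hdisc : ∃ ρ : ℝ, 0 < ρ ∧ ∀ x : K, x ≠ 0 → ∃ n : ℤ, v x = (((n : ℝ) * ρ : ℝ) : WithTop ℝ)) :
    ∃ π : K, π ≠ 0 ∧ 0 < v π ∧ ∀ z, 0 < v z → v π ≤ v z := by
  obtain ⟨π₀, hπ₀, hπ₀top⟩ := hrank
  obtain ⟨ρ, hρ, hmult⟩ := hdisc
  have hbot : v.valueGroup ≠ ⊥ := by
    obtain ⟨r, hr⟩ := v.exists_eq_coe_of_ne_zero (v.ne_top_iff.1 hπ₀top)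
    intro hbot
    have hr0 : r ∈ v.valueGroup := ⟨π₀, hr⟩
    rw [hbot, AddSubgroup.mem_bot] at hr0
    simp [hr, hr0] at hπ₀
  have hgap : Disjoint (v.valueGroup : Set ℝ) (Set.Ioo 0 ρ) := by
    refine Set.disjoint_left.2 fun r ⟨x, hx⟩ ⟨hr0, hrρ⟩ => ?_
    obtain ⟨n, hn⟩ := hmult x (by rintro rfl; simp at hx)
    rw [hx, WithTop.coe_eq_coe] at hn
    subst hn
    have h0 : (0 : ℤ) < n := by exact_mod_cast pos_of_mul_pos_left hr0 hρ.le
    have h1 : n < 1 := by exact_mod_cast (mul_lt_iff_lt_one_left hρ).1 hrρ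
    omega
  obtain ⟨a, ⟨⟨π, hπ⟩, ha⟩, hmin⟩ := AddSubgroup.exists_isLeast_pos hbot hρ hgap
  refine ⟨π, by rintro rfl; simp at hπ, by rw [hπ]; exact_mod_cast ha, fun z hz => ?_⟩
  rcases eq_or_ne z 0 with rfl | hz0
  · simp
  obtain ⟨r, hr⟩ := v.exists_eq_coe_of_ne_zero hz0
  rw [hπ, hr]
  rw [hr] at hz
  exact_mod_cast hmin ⟨⟨z, hr⟩, by exact_mod_cast hz⟩

theorem coe_neg_le_map_inv {x : K} {δ : ℝ} (h : v x ≤ δ) : ((-δ : ℝ) : WithTop ℝ) ≤ v x⁻¹ := by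
  obtain ⟨r, hr⟩ := WithTop.ne_top_iff_exists.1 (ne_top_of_le_ne_top WithTop.coe_ne_top h)
  rw [← hr] at h
  rw [v.map_inv, ← hr, ← WithTop.LinearOrderedAddCommGroup.coe_neg]
  exact_mod_cast neg_le_neg (by exact_mod_cast h)

theorem coe_le_coeff_of_eval_nodes {n : ℕ} {u : Fin (n + 1) → K} {δ : ℝ}
    (hu : ∀ j, 0 ≤ v (u j)) (hδ : ∀ j k, j ≠ k → v (u j - u k) ≤ δ)
    {f : K[X]} (hf : f.natDegree ≤ n) (hfu : ∀ j, 0 ≤ v (f.eval (u j))) (i : ℕ) :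
    ((-(n * δ) : ℝ) : WithTop ℝ) ≤ v (f.coeff i) := by
  have hinj : Set.InjOn u (Finset.univ : Finset (Fin (n + 1))) := fun j _ k _ hjk => by
    by_contra hne
    simpa [hjk] using hδ j k hne
  have hdeg : f.degree < (Finset.univ : Finset (Fin (n + 1))).card := by
    rw [Finset.card_univ, Fintype.card_fin]
    exact degree_le_natDegree.trans_lt (by exact_mod_cast Nat.lt_succ_of_le hf)
  rw [Lagrange.eq_interpolate hinj hdeg, Lagrange.interpolate_apply, finsetSum_coeff]
  refine v.map_le_sum fun j _ => ?_
  rw [coeff_C_mul, v.map_mul]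
  refine le_add_of_nonneg_of_le (hfu j) ?_
  have hb := v.le_coeff_prod (Finset.univ.erase j)
    (p := fun k => Lagrange.basisDivisor (u j) (u k)) (A := fun _ => ((-δ : ℝ) : WithTop ℝ))
    (fun k hk i =>
      (v.coe_neg_le_map_inv (hδ j k (Finset.ne_of_mem_erase hk).symm)).trans
        (v.map_inv_sub_le_coeff_basisDivisor _ (hu k) i)) i
  rw [Finset.sum_const, Finset.card_erase_of_mem (Finset.mem_univ j), Finset.card_univ,
    Fintype.card_fin, Nat.add_sub_cancel, ← WithTop.coe_nsmul, nsmul_eq_mul, mul_neg] at hb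
  exact hb

theorem map_pow_sub_pow_le {t : K} {s : ℝ} (ht : v t = s) (hs : 0 < s) {a b N : ℕ} (hab : a ≠ b)
    (ha : a ≤ N) (hb : b ≤ N) : v (t ^ a - t ^ b) ≤ ((N * s : ℝ) : WithTop ℝ) := by
  have hpow : ∀ m : ℕ, v (t ^ m) = ((m * s : ℝ) : WithTop ℝ) := fun m => by
    rw [v.map_pow, ht, ← WithTop.coe_nsmul, nsmul_eq_mul]
  have hmono : ∀ {m m' : ℕ}, m < m' → v (t ^ m) < v (t ^ m') := fun h => by
    rw [hpow, hpow]; exact_mod_cast mul_lt_mul_of_pos_right (by exact_mod_cast h) hs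
  have hle : ∀ {m : ℕ}, m ≤ N → v (t ^ m) ≤ ((N * s : ℝ) : WithTop ℝ) := fun h => by
    rw [hpow]; exact_mod_cast mul_le_mul_of_nonneg_right (by exact_mod_cast h) hs.le
  rcases hab.lt_or_gt with h | h
  · exact (v.map_sub_eq_of_lt_left (hmono h)).trans_le (hle ha)
  · exact (v.map_sub_eq_of_lt_right (hmono h)).trans_le (hle hb)

theorem coeff_nonneg_of_exists_map_pos_lt
    (hsmall : ∀ ε : ℝ, 0 < ε → ∃ t : K, 0 < v t ∧ v t < ε)
    {f : K[X]} (hf : ∀ u, v u = 0 → 0 ≤ v (f.eval u)) (i : ℕ) : 0 ≤ v (f.coeff i) := by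
  set n := f.natDegree
  have hbound : ∀ t : K, ∀ s : ℝ, v t = s → 0 < s →
      ((-(n * ((n + 1) * s)) : ℝ) : WithTop ℝ) ≤ v (f.coeff i) := by
    intro t s ht hs
    have hpos : ∀ m : ℕ, 0 < v (t ^ (m + 1)) := fun m => by
      rw [v.map_pow, ht, ← WithTop.coe_nsmul]; exact_mod_cast nsmul_pos hs m.succ_ne_zero
    have hunit : ∀ j : Fin (n + 1), v (1 + t ^ (j.val + 1)) = 0 := fun j => by
      rw [v.map_add_eq_of_lt_left (by rw [v.map_one]; exact hpos _), v.map_one]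
    refine v.coe_le_coeff_of_eval_nodes (u := fun j => 1 + t ^ (j.val + 1))
      (fun j => (hunit j).ge) (fun j k hjk => ?_) le_rfl (fun j => hf _ (hunit j)) i
    rw [add_sub_add_left_eq_sub]
    exact_mod_cast v.map_pow_sub_pow_le ht hs (by simpa [Fin.val_inj] using hjk)
      (Nat.succ_le_succ j.is_le) (Nat.succ_le_succ k.is_le)
  rcases eq_or_ne (f.coeff i) 0 with h0 | h0
  · simp [h0]
  obtain ⟨r, hr⟩ := v.exists_eq_coe_of_ne_zero h0
  rw [hr, WithTop.coe_nonneg]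
  by_contra! hr0
  obtain ⟨t, ht0, htε⟩ :=
    hsmall (-r / (n * (n + 1) + 1)) (div_pos (neg_pos.2 hr0) (by positivity))
  obtain ⟨s, hs⟩ := v.exists_eq_coe_of_ne_zero (x := t) (by rintro rfl; simp at htε)
  rw [hs, WithTop.coe_pos] at ht0
  rw [hs, WithTop.coe_lt_coe, lt_div_iff₀ (by positivity)] at htε
  have h := hbound t s hs ht0
  rw [hr, WithTop.coe_le_coe] at h
  nlinarith

end Real

end AddValuation

theorem stmt16_general {K : Type*} [Field K] (v : AddValuation K (WithTop ℝ))
    (hrank : ∃ π : K, 0 < v π ∧ v π ≠ ⊤)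
    (V : Subring K) (hV : ∀ x : K, x ∈ V ↔ 0 ≤ v x)
    (M : Ideal V) (hM : ∀ x : V, x ∈ M ↔ 0 < v (x : K))
    (α : K)
    (γ : ℝ) (hγ : ∃ x : K, x ≠ 0 ∧ v x = (γ : WithTop ℝ)) :
    (((¬ ∃ ρ : ℝ, 0 < ρ ∧ ∀ x : K, x ≠ 0 → ∃ n : ℤ, v x = (((n : ℝ) * ρ : ℝ) : WithTop ℝ)) ∨
        Infinite (V ⧸ M)) →
      {y : K | ∀ f : Polynomial K,
          (∀ x : K, v (x - α) = (γ : WithTop ℝ) → 0 ≤ v (f.eval x)) → 0 ≤ v (f.eval y)} =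
        {y : K | (γ : WithTop ℝ) ≤ v (y - α)}) ∧
    (((∃ ρ : ℝ, 0 < ρ ∧ ∀ x : K, x ≠ 0 → ∃ n : ℤ, v x = (((n : ℝ) * ρ : ℝ) : WithTop ℝ)) ∧
        Finite (V ⧸ M)) →
      {y : K | ∀ f : Polynomial K,
          (∀ x : K, v (x - α) = (γ : WithTop ℝ) → 0 ≤ v (f.eval x)) → 0 ≤ v (f.eval y)} =
        {y : K | v (y - α) = (γ : WithTop ℝ)}) := by
  obtain ⟨c, hc0, hvc⟩ := hγ
  have hsphere : {x | v (x - α) = γ} = (fun x => c⁻¹ * (x - α)) ⁻¹' {u | v u = 0} := by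
    ext x
    simp only [Set.mem_preimage, Set.mem_ofPred_eq, v.map_inv_mul_eq_zero_iff hc0, hvc]
  have hclosure (y : K) : y ∈ v.polyClosure {x | v (x - α) = γ} ↔
      c⁻¹ * (y - α) ∈ v.polyClosure {u | v u = 0} := by
    rw [hsphere]
    exact v.mem_polyClosure_preimage_affine_iff (inv_ne_zero hc0) α _ y
  refine ⟨fun hyp => ?_, fun ⟨hdisc, hfin⟩ => ?_⟩
  · have hcoeff : ∀ f : K[X], (∀ u, v u = 0 → 0 ≤ v (f.eval u)) → ∀ i, 0 ≤ v (f.coeff i) :=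
      hyp.elim
        (fun hnd _ => v.coeff_nonneg_of_exists_map_pos_lt fun _ =>
          v.exists_map_pos_lt_of_not_discrete hnd)
        (fun _ _ => v.coeff_nonneg_of_infinite_quotient hV hM)
    ext y
    refine (hclosure y).trans ?_
    rw [v.polyClosure_unitSphere_eq_of_coeff_nonneg hcoeff, Set.mem_ofPred_eq,
      v.zero_le_map_inv_mul_iff hc0, hvc]
    rfl
  · obtain ⟨π, hπ0, hπ, hmin⟩ := v.exists_map_pos_le_of_discrete hrank hdisc
    ext y
    refine (hclosure y).trans ?_
    rw [v.polyClosure_unitSphere_eq_self hV hM hπ0 hπ hmin, Set.mem_ofPred_eq,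
      v.map_inv_mul_eq_zero_iff hc0, hvc]
    rfl

/-- Let `V` be a rank-one valuation domain, `α ∈ V`, `γ ∈ Γ_v`.
If `V` is not discrete or the residue field `V ⧸ M` is infinite, then the
polynomial closure of the sphere `∂B(α,γ) = {x : v (x - α) = γ}` is the closed
ball `B(α,γ)`.  If `V` is discrete (a DVR) with finite residue field, then
`∂B(α,γ)` is polynomially closed. -/
theorem stmt16 {K : Type*} [Field K] (v : AddValuation K (WithTop ℝ))
    (hrank : ∃ π : K, 0 < v π ∧ v π ≠ ⊤)
    (V : Subring K) (hV : ∀ x : K, x ∈ V ↔ 0 ≤ v x)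
    (M : Ideal V) (hM : ∀ x : V, x ∈ M ↔ 0 < v (x : K))
    (α : K) (hα : 0 ≤ v α)
    (γ : ℝ) (hγ : ∃ x : K, x ≠ 0 ∧ v x = (γ : WithTop ℝ)) :
    (((¬ ∃ ρ : ℝ, 0 < ρ ∧ ∀ x : K, x ≠ 0 → ∃ n : ℤ, v x = (((n : ℝ) * ρ : ℝ) : WithTop ℝ)) ∨
        Infinite (V ⧸ M)) →
      {y : K | ∀ f : Polynomial K,
          (∀ x : K, v (x - α) = (γ : WithTop ℝ) → 0 ≤ v (f.eval x)) → 0 ≤ v (f.eval y)} =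
        {y : K | (γ : WithTop ℝ) ≤ v (y - α)}) ∧
    (((∃ ρ : ℝ, 0 < ρ ∧ ∀ x : K, x ≠ 0 → ∃ n : ℤ, v x = (((n : ℝ) * ρ : ℝ) : WithTop ℝ)) ∧
        Finite (V ⧸ M)) →
      {y : K | ∀ f : Polynomial K,
          (∀ x : K, v (x - α) = (γ : WithTop ℝ) → 0 ≤ v (f.eval x)) → 0 ≤ v (f.eval y)} =
        {y : K | v (y - α) = (γ : WithTop ℝ)}) :=
  stmt16_general v hrank V hV M hM α γ hγ
end

section
/- Let R ⊂ K[X] be an integral domain with quotient field K(X) such that R ⊆ V_{α,γ'} for some α ∈ V and γ' ∈ Γ_v, and let γ = inf{γ' ∈ Γ_v : R ⊆ V_{α,γ'}} ∈ ℝ. Then R ⊆ V_{α,γ}, where V_{α,γ} is defined for the real number γ by v_{α,γ}(Σ a_i(X-α)^i) = min_i(v(a_i) + iγ). -/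
open Polynomial

/-- Let `R ⊆ K[X]` be an integral domain with quotient field
`K(X)` such that `R ⊆ V_{α,γ'}` for some `α ∈ V` and `γ' ∈ Γ_v`, and let
`γ = inf {γ' ∈ Γ_v : R ⊆ V_{α,γ'}} ∈ ℝ`.  Then `R ⊆ V_{α,γ}`. -/
theorem stmt17 {K : Type*} [Field K] (v : AddValuation K (WithTop ℝ))
    (hrank : ∃ π : K, 0 < v π ∧ v π ≠ ⊤)
    (α : K) (hα : 0 ≤ v α)
    (R : Subring (Polynomial K))
    (hqfR : ∀ φ : RatFunc K, ∃ f g : Polynomial K, f ∈ R ∧ g ∈ R ∧ g ≠ 0 ∧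
      φ * algebraMap (Polynomial K) (RatFunc K) g = algebraMap (Polynomial K) (RatFunc K) f)
    (hne : ∃ γ' : ℝ, (∃ x : K, x ≠ 0 ∧ v x = (γ' : WithTop ℝ)) ∧
      ∀ f ∈ R, 0 ≤ vAlphaGamma v α γ' f) :
    ∀ f ∈ R, 0 ≤ vAlphaGamma v α
      (sInf {γ' : ℝ | (∃ x : K, x ≠ 0 ∧ v x = (γ' : WithTop ℝ)) ∧
        ∀ f ∈ R, 0 ≤ vAlphaGamma v α γ' f}) f := by
  intro f hf
  set S : Set ℝ := {γ' : ℝ | (∃ x : K, x ≠ 0 ∧ v x = (γ' : WithTop ℝ)) ∧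
        ∀ f ∈ R, 0 ≤ vAlphaGamma v α γ' f} with hSdef
  obtain ⟨γ₀, hγ₀x, hγ₀⟩ := hne
  have hγ₀S : γ₀ ∈ S := ⟨hγ₀x, hγ₀⟩
  have hSne : S.Nonempty := ⟨γ₀, hγ₀S⟩
  set γ : ℝ := sInf S with hγdef
  show 0 ≤ (f.comp (X + C α)).support.inf
    (fun i => v ((f.comp (X + C α)).coeff i) + (((i : ℝ) * γ : ℝ) : WithTop ℝ))
  apply Finset.le_inf
  intro i hi
  have hai : (f.comp (X + C α)).coeff i ≠ 0 := Polynomial.mem_support_iff.mp hi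
  have htop : v ((f.comp (X + C α)).coeff i) ≠ ⊤ := by
    intro h
    have h1 : v ((f.comp (X + C α)).coeff i * ((f.comp (X + C α)).coeff i)⁻¹) = 0 := by
      rw [mul_inv_cancel₀ hai, v.map_one]
    rw [v.map_mul, h, top_add] at h1
    exact (by simp : (⊤ : WithTop ℝ) ≠ 0) h1
  obtain ⟨r, hr⟩ := WithTop.ne_top_iff_exists.mp htop
  -- key estimate at each γ' ∈ S
  have key : ∀ γ' ∈ S, 0 ≤ r + (i : ℝ) * γ' := by
    intro γ' hγ'
    have h1 : 0 ≤ vAlphaGamma v α γ' f := hγ'.2 f hf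
    have h2 : vAlphaGamma v α γ' f ≤
        v ((f.comp (X + C α)).coeff i) + (((i : ℝ) * γ' : ℝ) : WithTop ℝ) :=
      Finset.inf_le hi
    have h3 : (0 : WithTop ℝ) ≤ ((r + (i : ℝ) * γ' : ℝ) : WithTop ℝ) := by
      rw [← hr] at h2
      rw [WithTop.coe_add]
      exact le_trans h1 h2
    exact_mod_cast h3
  have hreal : 0 ≤ r + (i : ℝ) * γ := by
    rcases Nat.eq_zero_or_pos i with h0 | hpos
    · have := key γ₀ hγ₀S
      simp [h0] at this ⊢
      linarith
    · have ipos : (0 : ℝ) < (i : ℝ) := by exact_mod_cast hpos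
      have hlb : ∀ γ' ∈ S, -r / (i : ℝ) ≤ γ' := by
        intro γ' hγ'
        rw [div_le_iff₀ ipos]
        have := key γ' hγ'
        nlinarith
      have hs : -r / (i : ℝ) ≤ γ := le_csInf hSne hlb
      have h4 : (i : ℝ) * (-r / (i : ℝ)) ≤ (i : ℝ) * γ :=
        mul_le_mul_of_nonneg_left hs (le_of_lt ipos)
      have h5 : (i : ℝ) * (-r / (i : ℝ)) = -r := by field_simp
      linarith
  rw [← hr, ← WithTop.coe_add]
  exact_mod_cast hreal
end

section
/- Let V be a rank one valuation domain, S ⊆ V, α ∈ V, γ ∈ Γ_v, and let S_{α,γ} = {s ∈ S : v(s - α) = γ}. Then B(α, γ) is contained in the polynomial closure of S_{α,γ} if and only if S_{α,γ} contains a pseudo-monotone sequence E with breadth γ such that either E is pseudo-stationary with pseudo-limit α, or E is pseudo-divergent with a pseudo-limit belonging to S_{α,γ}. Moreover, if V is a DVR, only the pseudo-stationary case can occur. -/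
/-!
For `y` in the ball, Lagrange interpolation of `f` at `d + 1` terms of the sequence bounds
`v (f y)` below by `d (γ - δ)`, where `δ` bounds the mutual distances of the nodes: for a
pseudo-stationary sequence `δ = γ`, and for a pseudo-divergent one `δ` can be taken arbitrarily
close to `γ`.

Conversely, let `α` lie in the polynomial closure of `T = S_{α,γ}`. If no finitely many points of
`T` cover it by balls of radius `> γ`, a greedy choice gives a pseudo-stationary sequence.
Otherwise some centre `t` of such a cover has the values `v (x - t) > γ`, `x ∈ T`, accumulating
at `γ`, which gives a pseudo-divergent sequence with pseudo-limit `t`: if no centre did, there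
would be a uniform gap `δ > γ`, and `c ∏ (X - t) ^ m` with suitable `m` and `c` would be integral
on `T` but not at `α`. In a DVR the breadths of a pseudo-divergent sequence form a strictly
decreasing sequence in `ρℤ`, which cannot converge.
-/

open Filter Topology Polynomial

section

variable {K : Type*} [Field K] (v : AddValuation K (WithTop ℝ))

def polynomialClosure (T : Set K) : Set K :=
  {y | ∀ f : K[X], (∀ t ∈ T, 0 ≤ v (f.eval t)) → 0 ≤ v (f.eval y)}

def IsPseudoStationary (s : ℕ → K) (γ : ℝ) : Prop :=
  Pairwise fun n m => v (s n - s m) = γ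

def IsPseudoDivergent (s : ℕ → K) (γ : ℝ) : Prop :=
  ∃ u : ℕ → ℝ, StrictAnti u ∧ Tendsto u atTop (𝓝 γ) ∧ ∀ n, v (s (n + 1) - s n) = u n

variable {v}

theorem polynomialClosure_mono {T₁ T₂ : Set K} (h : T₁ ⊆ T₂) :
    polynomialClosure v T₁ ⊆ polynomialClosure v T₂ :=
  fun _ hy f hf => hy f fun t ht => hf t (h ht)

theorem AddValuation.map_prod {ι : Type*} (s : Finset ι) (g : ι → K) :
    v (∏ i ∈ s, g i) = ∑ i ∈ s, v (g i) :=
  _root_.map_prod v.toValuation g s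

theorem valuation_zpow {π : K} {p : ℝ} (hπ : v π = p) (N : ℤ) :
    v (π ^ N) = ((N * p : ℝ) : WithTop ℝ) := by
  rcases Int.eq_nat_or_neg N with ⟨n, rfl | rfl⟩
  · simp [AddValuation.map_pow, hπ, ← WithTop.coe_nsmul]
  · rw [zpow_neg, zpow_natCast, v.map_inv, v.map_pow, hπ, ← WithTop.coe_nsmul,
      ← WithTop.LinearOrderedAddCommGroup.coe_neg]
    simp

theorem le_valuation_sub_of_le_of_le {x y α : K} {γ : WithTop ℝ} (hx : γ ≤ v (x - α))
    (hy : γ ≤ v (y - α)) : γ ≤ v (x - y) := by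
  simpa using v.map_le_sub hx hy

theorem coe_sub_le_valuation_inv_mul {a b : K} {γ δ : ℝ} (ha : γ ≤ v a) (hb : v b ≤ δ) :
    ((γ - δ : ℝ) : WithTop ℝ) ≤ v (b⁻¹ * a) := by
  obtain ⟨r, hr⟩ := WithTop.ne_top_iff_exists.mp (ne_top_of_le_ne_top WithTop.coe_ne_top hb)
  rw [v.map_mul, v.map_inv, ← hr, ← WithTop.LinearOrderedAddCommGroup.coe_neg, add_comm]
  rw [← hr, WithTop.coe_le_coe] at hb
  calc ((γ - δ : ℝ) : WithTop ℝ) ≤ ((γ + -r : ℝ) : WithTop ℝ) := by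
        exact_mod_cast (by linarith : γ - δ ≤ γ + -r)
    _ ≤ v a + ((-r : ℝ) : WithTop ℝ) := by
        rw [WithTop.coe_add]; exact add_le_add_left ha _

theorem Polynomial.degree_lt_natDegree_add_one {R : Type*} [Semiring R] (f : R[X]) :
    f.degree < ↑(f.natDegree + 1) :=
  degree_le_natDegree.trans_lt (by exact_mod_cast Nat.lt_succ_self _)

theorem nsmul_le_valuation_eval_of_nodes {ι : Type*} {s : Finset ι} {x : ι → K} {f : K[X]}
    (hdeg : f.degree < s.card) {y : K} {γ δ : ℝ}
    (hy : ∀ i ∈ s, (γ : WithTop ℝ) ≤ v (y - x i))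
    (hx : ∀ i ∈ s, ∀ j ∈ s, i ≠ j → v (x i - x j) ≤ δ)
    (hf : ∀ i ∈ s, 0 ≤ v (f.eval (x i))) :
    (s.card - 1) • ((γ - δ : ℝ) : WithTop ℝ) ≤ v (f.eval y) := by
  classical
  have hinj : Set.InjOn x s := fun i hi j hj hij => by
    by_contra hne
    have := hx i hi j hj hne
    rw [hij, sub_self, v.map_zero] at this
    exact WithTop.not_top_le_coe _ this
  rw [Lagrange.eq_interpolate hinj hdeg, Lagrange.interpolate_apply, eval_finsetSum]
  refine v.map_le_sum fun i hi => ?_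
  simp only [eval_mul, eval_C, Lagrange.basis, eval_prod, Lagrange.basisDivisor, eval_X, eval_sub]
  rw [v.map_mul, v.map_prod, ← Finset.card_erase_of_mem hi, ← Finset.sum_const,
    ← zero_add (∑ _ ∈ _, _)]
  exact add_le_add (hf i hi) <| Finset.sum_le_sum fun j hj =>
    coe_sub_le_valuation_inv_mul (hy j (Finset.mem_of_mem_erase hj))
      (hx i hi j (Finset.mem_of_mem_erase hj) (Finset.ne_of_mem_erase hj).symm)

theorem IsPseudoStationary.ball_subset_polynomialClosure {s : ℕ → K} {γ : ℝ}
    (hs : IsPseudoStationary v s γ) {α : K} (hsα : ∀ n, (γ : WithTop ℝ) ≤ v (s n - α)) :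
    {y | (γ : WithTop ℝ) ≤ v (y - α)} ⊆ polynomialClosure v (Set.range s) := by
  intro y hy f hf
  have hdeg : f.degree < (Finset.range (f.natDegree + 1)).card := by
    rw [Finset.card_range]; exact f.degree_lt_natDegree_add_one
  simpa using nsmul_le_valuation_eval_of_nodes hdeg
    (fun n _ => le_valuation_sub_of_le_of_le hy (hsα n))
    (fun n _ m _ hnm => (hs hnm).le) (fun n _ => hf _ ⟨n, rfl⟩)

theorem WithTop.zero_le_of_forall_coe_le {c : ℕ → ℝ} (hc : Tendsto c atTop (𝓝 0))
    {w : WithTop ℝ} (h : ∀ n, (c n : WithTop ℝ) ≤ w) : 0 ≤ w := by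
  induction w with
  | top => exact le_top
  | coe r => exact_mod_cast le_of_tendsto' hc fun n => by exact_mod_cast h n

theorem valuation_sub_of_strictAnti {s : ℕ → K} {u : ℕ → ℝ} (hu : StrictAnti u)
    (hs : ∀ n, v (s (n + 1) - s n) = u n) (m k : ℕ) : v (s (m + k + 1) - s m) = u (m + k) := by
  induction k with
  | zero => simpa using hs m
  | succ k ih =>
    have hsplit : s (m + (k + 1) + 1) - s m =
        (s (m + k + 1 + 1) - s (m + k + 1)) + (s (m + k + 1) - s m) := by ring_nf
    rw [hsplit, v.map_add_eq_of_lt_left, hs]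
    · rfl
    · rw [hs, ih]; exact_mod_cast hu (by omega)

theorem valuation_sub_le_of_strictAnti {s : ℕ → K} {u : ℕ → ℝ} (hu : StrictAnti u)
    (hs : ∀ n, v (s (n + 1) - s n) = u n) {i j : ℕ} (hij : i ≠ j) :
    v (s i - s j) ≤ u (min i j) := by
  wlog hlt : i < j generalizing i j
  · rw [v.map_sub_swap, min_comm]; exact this hij.symm (by omega)
  obtain ⟨k, rfl⟩ := Nat.exists_eq_add_of_lt hlt
  rw [v.map_sub_swap, valuation_sub_of_strictAnti hu hs, min_eq_left (by omega)]
  exact_mod_cast hu.antitone (by omega)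

theorem IsPseudoDivergent.ball_subset_polynomialClosure {s : ℕ → K} {γ : ℝ}
    (hs : IsPseudoDivergent v s γ) {α : K} (hsα : ∀ n, (γ : WithTop ℝ) ≤ v (s n - α)) :
    {y | (γ : WithTop ℝ) ≤ v (y - α)} ⊆ polynomialClosure v (Set.range s) := by
  obtain ⟨u, hu, hlim, hsu⟩ := hs
  intro y hy f hf
  have hdeg : f.degree < (Finset.range (f.natDegree + 1)).card := by
    rw [Finset.card_range]; exact f.degree_lt_natDegree_add_one
  refine WithTop.zero_le_of_forall_coe_le (c := fun n => f.natDegree * (γ - u n)) ?_ fun n => ?_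
  · simpa using ((tendsto_const_nhds (x := γ)).sub hlim).const_mul (f.natDegree : ℝ)
  · simpa only [Finset.card_range, add_tsub_cancel_right, ← WithTop.coe_nsmul, nsmul_eq_mul]
      using nsmul_le_valuation_eval_of_nodes (x := fun i => s (n + i)) hdeg
      (fun i _ => le_valuation_sub_of_le_of_le hy (hsα _))
      (fun i _ j _ hij => (valuation_sub_le_of_strictAnti hu hsu (by omega)).trans
        (by exact_mod_cast hu.antitone (by omega : n ≤ min (n + i) (n + j))))
      (fun i _ => hf _ ⟨_, rfl⟩)

theorem StrictAnti.not_tendsto_of_forall_eq_int_mul {u : ℕ → ℝ} (hu : StrictAnti u) {ρ : ℝ}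
    (hρ : 0 < ρ) (hk : ∀ n, ∃ k : ℤ, u n = k * ρ) (γ : ℝ) : ¬ Tendsto u atTop (𝓝 γ) := by
  intro h
  have hgap : ∀ n, ρ ≤ u n - u (n + 1) := fun n => by
    obtain ⟨k, hkn⟩ := hk n
    obtain ⟨k', hk'⟩ := hk (n + 1)
    have hlt : k' < k := by
      have := hu (Nat.lt_succ_self n)
      rw [hkn, hk'] at this
      exact_mod_cast lt_of_mul_lt_mul_right this hρ.le
    have : (1 : ℝ) ≤ k - k' := by exact_mod_cast (by omega : (1 : ℤ) ≤ k - k')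
    rw [hkn, hk']; nlinarith
  have hsmall : Tendsto (fun n => u n - u (n + 1)) atTop (𝓝 0) := by
    simpa using h.sub (h.comp (tendsto_add_atTop_nat 1))
  obtain ⟨n, hn⟩ := (hsmall.eventually (gt_mem_nhds hρ)).exists
  linarith [hgap n]

theorem not_isPseudoDivergent_of_discrete {ρ : ℝ} (hρ : 0 < ρ)
    (hv : ∀ x : K, x ≠ 0 → ∃ n : ℤ, v x = ((n * ρ : ℝ) : WithTop ℝ)) (s : ℕ → K) (γ : ℝ) :
    ¬ IsPseudoDivergent v s γ := by
  rintro ⟨u, hu, hlim, hsu⟩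
  refine hu.not_tendsto_of_forall_eq_int_mul hρ (fun n => ?_) γ hlim
  have hne : s (n + 1) - s n ≠ 0 := fun h => by
    simpa [h] using hsu n
  obtain ⟨k, hk⟩ := hv _ hne
  exact ⟨k, by rw [hsu n] at hk; exact_mod_cast hk⟩

theorem exists_valuation_mem_Ico {π : K} {p : ℝ} (hπ : v π = p) (hp : 0 < p) (b : ℝ) :
    ∃ c : K, ∃ r : ℝ, v c = r ∧ b - p ≤ r ∧ r < b := by
  set N : ℤ := ⌈b / p⌉ - 1
  have hN : (N : ℝ) < b / p ∧ b / p ≤ N + 1 := by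
    constructor <;> push_cast [N] <;> linarith [Int.ceil_lt_add_one (b / p), Int.le_ceil (b / p)]
  have hlt := (lt_div_iff₀ hp).mp hN.1
  have hle := (div_le_iff₀ hp).mp hN.2
  exact ⟨π ^ N, _, valuation_zpow hπ N, by linarith, hlt⟩

theorem exists_polynomial_of_gap {π : K} (hπ : 0 < v π) (hπ_top : v π ≠ ⊤) (F : Finset K)
    {γ δ : ℝ} (hγδ : γ < δ) {α : K} (hα : ∀ t ∈ F, v (α - t) = γ) :
    ∃ f : K[X], v (f.eval α) < 0 ∧ ∀ x, (∀ t ∈ F, (γ : WithTop ℝ) ≤ v (x - t)) →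
      (∃ t ∈ F, (δ : WithTop ℝ) ≤ v (x - t)) → 0 ≤ v (f.eval x) := by
  classical
  obtain ⟨p, hp⟩ := WithTop.ne_top_iff_exists.mp hπ_top
  have hp0 : 0 < p := by rw [← hp] at hπ; exact_mod_cast hπ
  -- `m (δ - γ) ≥ p` lets the gap absorb the rounding of `v c` to a multiple of `p`
  set m := ⌈p / (δ - γ)⌉₊
  have hm : p ≤ m * (δ - γ) := (div_le_iff₀ (sub_pos.2 hγδ)).mp (Nat.le_ceil _)
  obtain ⟨c, r, hc, hr⟩ := exists_valuation_mem_Ico hp.symm hp0 (-(m * (F.card * γ)))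
  have heval : ∀ x, v ((C c * (∏ t ∈ F, (X - C t)) ^ m).eval x) =
      r + m • ∑ t ∈ F, v (x - t) := fun x => by
    simp only [eval_mul, eval_C, eval_pow, eval_prod, eval_sub, eval_X, v.map_mul, v.map_pow,
      v.map_prod, hc]
  refine ⟨C c * (∏ t ∈ F, (X - C t)) ^ m, ?_, fun x hx ⟨t₀, ht₀, hδ⟩ => ?_⟩
  · rw [heval, Finset.sum_congr rfl hα, Finset.sum_const, ← WithTop.coe_nsmul,
      ← WithTop.coe_nsmul, ← WithTop.coe_add]
    have : r + m • F.card • γ < 0 := by simp only [nsmul_eq_mul]; linarith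
    exact_mod_cast this
  · have hsum : ((F.card * γ + (δ - γ) : ℝ) : WithTop ℝ) ≤ ∑ t ∈ F, v (x - t) := by
      rw [← Finset.add_sum_erase F _ ht₀]
      calc ((F.card * γ + (δ - γ) : ℝ) : WithTop ℝ) = δ + (F.erase t₀).card • (γ : WithTop ℝ) := by
            rw [Finset.card_erase_of_mem ht₀, ← WithTop.coe_nsmul, ← WithTop.coe_add, nsmul_eq_mul,
              Nat.cast_pred (Finset.card_pos.2 ⟨t₀, ht₀⟩)]
            congr 1; ring
        _ ≤ _ := add_le_add hδ <|
          Finset.card_nsmul_le_sum _ _ _ fun t ht => hx t (Finset.mem_of_mem_erase ht)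
    calc (0 : WithTop ℝ) ≤ ((r + m * (F.card * γ + (δ - γ)) : ℝ) : WithTop ℝ) := by
          exact_mod_cast (by nlinarith : (0 : ℝ) ≤ r + m * (F.card * γ + (δ - γ)))
      _ = r + m • ((F.card * γ + (δ - γ) : ℝ) : WithTop ℝ) := by
          rw [← WithTop.coe_nsmul, ← WithTop.coe_add, nsmul_eq_mul]
      _ ≤ r + m • ∑ t ∈ F, v (x - t) := add_le_add_right (nsmul_le_nsmul_right hsum m) _
      _ = _ := (heval x).symm

theorem exists_isPseudoStationary_of_forall_finset {T : Set K} {α : K} {γ : ℝ}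
    (hT : ∀ t ∈ T, v (t - α) = γ)
    (h : ∀ F : Finset K, ↑F ⊆ T → ∃ x ∈ T, ∀ t ∈ F, v (x - t) ≤ γ) :
    ∃ s : ℕ → K, (∀ n, s n ∈ T) ∧ IsPseudoStationary v s γ := by
  have : Std.Symm fun a b : K => v (a - b) = γ := ⟨fun a b h => by rwa [v.map_sub_swap]⟩
  refine exists_seq_of_forall_finset_exists' (· ∈ T) (fun a b : K => v (a - b) = γ) fun F hF => ?_
  obtain ⟨x, hx, hxF⟩ := h F hF
  refine ⟨x, hx, fun t ht => le_antisymm ?_ ?_⟩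
  · rw [v.map_sub_swap]; exact hxF t ht
  · exact le_valuation_sub_of_le_of_le (hT t (hF t ht)).ge (hT x hx).ge

theorem exists_isPseudoDivergent_of_isGLB {T : Set K} {t : K} {γ : ℝ}
    (h : IsGLB {r : ℝ | γ < r ∧ ∃ x ∈ T, v (x - t) = r} γ) :
    ∃ s : ℕ → K, (∀ n, s n ∈ T) ∧ IsPseudoDivergent v s γ ∧
      ∀ n, v (t - s (n + 1)) < v (t - s n) := by
  obtain ⟨r, hr, -, hlim, hrA⟩ :=
    h.exists_seq_strictAnti_tendsto_of_notMem (fun hγ => lt_irrefl γ hγ.1) h.nonempty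
  choose s hsT hs using fun n => (hrA n).2
  have hts : ∀ n, v (t - s n) = r n := fun n => by rw [v.map_sub_swap, hs]
  have hlt : ∀ n, v (t - s (n + 1)) < v (t - s n) := fun n => by
    rw [hts, hts]; exact_mod_cast hr (Nat.lt_succ_self n)
  refine ⟨s, hsT, ⟨fun n => r (n + 1), fun a b hab => hr (by omega),
    hlim.comp (tendsto_add_atTop_nat 1), fun n => ?_⟩, hlt⟩
  rw [← sub_sub_sub_cancel_left _ _ t, v.map_sub_eq_of_lt_right (hlt n), hts]

theorem exists_gt_forall_mem_lowerBounds {ι : Type*} (F : Finset ι) {A : ι → Set ℝ} {γ : ℝ}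
    (hγ : ∀ i ∈ F, γ ∈ lowerBounds (A i)) (h : ∀ i ∈ F, ¬ IsGLB (A i) γ) :
    ∃ δ > γ, ∀ i ∈ F, δ ∈ lowerBounds (A i) := by
  have : ∀ i ∈ F, ∀ᶠ δ in 𝓝[>] γ, δ ∈ lowerBounds (A i) := fun i hi => by
    obtain ⟨δ, hδ, hγδ⟩ : ∃ δ ∈ lowerBounds (A i), γ < δ := by
      by_contra! H
      exact h i hi ⟨hγ i hi, H⟩
    filter_upwards [Ioc_mem_nhdsGT hγδ] with δ' hδ' a ha using hδ'.2.trans (hδ ha)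
  obtain ⟨δ, hδ, hγδ⟩ := (((eventually_all_finset F).2 this).and self_mem_nhdsWithin).exists
  exact ⟨δ, hγδ, hδ⟩

theorem exists_pseudoMonotone_of_mem_polynomialClosure {π : K} (hπ : 0 < v π)
    (hπ_top : v π ≠ ⊤) {T : Set K} {α : K} {γ : ℝ} (hT : ∀ t ∈ T, v (t - α) = γ)
    (hα : α ∈ polynomialClosure v T) :
    ∃ s : ℕ → K, (∀ n, s n ∈ T) ∧ (IsPseudoStationary v s γ ∨
      IsPseudoDivergent v s γ ∧ ∃ t ∈ T, ∀ n, v (t - s (n + 1)) < v (t - s n)) := by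
  by_cases hcover : ∃ F : Finset K, ↑F ⊆ T ∧ ∀ x ∈ T, ∃ t ∈ F, (γ : WithTop ℝ) < v (x - t)
  · obtain ⟨F, hFT, hcover⟩ := hcover
    by_cases hacc : ∃ t ∈ F, IsGLB {r : ℝ | γ < r ∧ ∃ x ∈ T, v (x - t) = r} γ
    · obtain ⟨t, ht, hglb⟩ := hacc
      obtain ⟨s, hsT, hs, hst⟩ := exists_isPseudoDivergent_of_isGLB hglb
      exact ⟨s, hsT, .inr ⟨hs, t, hFT ht, hst⟩⟩
    push Not at hacc
    obtain ⟨δ, hγδ, hδ⟩ := exists_gt_forall_mem_lowerBounds F (fun t _ r hr => hr.1.le) hacc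
    obtain ⟨f, hfα, hf⟩ := exists_polynomial_of_gap hπ hπ_top F hγδ
      (fun t ht => by rw [v.map_sub_swap]; exact hT t (hFT ht))
    refine absurd (hα f fun x hx => hf x (fun t ht => ?_) ?_) hfα.not_ge
    · exact le_valuation_sub_of_le_of_le (hT x hx).ge (hT t (hFT ht)).ge
    obtain ⟨t, ht, hγx⟩ := hcover x hx
    refine ⟨t, ht, ?_⟩
    rcases eq_or_ne (v (x - t)) ⊤ with htop | htop
    · rw [htop]; exact le_top
    obtain ⟨r, hr⟩ := WithTop.ne_top_iff_exists.mp htop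
    rw [← hr] at hγx ⊢
    exact_mod_cast hδ t ht ⟨by exact_mod_cast hγx, x, hx, hr.symm⟩
  push Not at hcover
  obtain ⟨s, hsT, hs⟩ := exists_isPseudoStationary_of_forall_finset hT hcover
  exact ⟨s, hsT, .inl hs⟩

theorem ball_subset_polynomialClosure_iff {π : K} (hπ : 0 < v π) (hπ_top : v π ≠ ⊤)
    {T : Set K} {α : K} {γ : ℝ} (hT : ∀ t ∈ T, v (t - α) = γ) :
    {y | (γ : WithTop ℝ) ≤ v (y - α)} ⊆ polynomialClosure v T ↔
      ∃ s : ℕ → K, (∀ n, s n ∈ T) ∧ (IsPseudoStationary v s γ ∨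
        IsPseudoDivergent v s γ ∧ ∃ t ∈ T, ∀ n, v (t - s (n + 1)) < v (t - s n)) := by
  refine ⟨fun h => exists_pseudoMonotone_of_mem_polynomialClosure hπ hπ_top hT (h (by simp)), ?_⟩
  rintro ⟨s, hsT, hs | ⟨hs, -⟩⟩ <;>
    refine .trans ?_ (polynomialClosure_mono (Set.range_subset_iff.2 hsT))
  · exact hs.ball_subset_polynomialClosure fun n => (hT _ (hsT n)).ge
  · exact hs.ball_subset_polynomialClosure fun n => (hT _ (hsT n)).ge

end

theorem stmt18_general {K : Type*} [Field K] (v : AddValuation K (WithTop ℝ))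
    (hrank : ∃ π : K, 0 < v π ∧ v π ≠ ⊤)
    (S : Set K)
    (α : K)
    (γ : ℝ) :
    ((∀ y : K, (γ : WithTop ℝ) ≤ v (y - α) →
        ∀ f : Polynomial K,
          (∀ t, t ∈ S → v (t - α) = (γ : WithTop ℝ) → 0 ≤ v (f.eval t)) →
          0 ≤ v (f.eval y)) ↔
      (∃ s : ℕ → K, (∀ n, s n ∈ S ∧ v (s n - α) = (γ : WithTop ℝ)) ∧
        (((∀ n m : ℕ, n ≠ m → v (s n - s m) = (γ : WithTop ℝ)) ∧
            (∀ n, v (α - s n) = (γ : WithTop ℝ))) ∨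
          (∃ u : ℕ → ℝ, StrictAnti u ∧ Tendsto u atTop (𝓝 γ) ∧
            (∀ n, v (s (n + 1) - s n) = (u n : WithTop ℝ)) ∧
            ∃ t : K, (t ∈ S ∧ v (t - α) = (γ : WithTop ℝ)) ∧
              ∀ n, v (t - s (n + 1)) < v (t - s n))))) ∧
    ((∃ ρ : ℝ, 0 < ρ ∧ ∀ x : K, x ≠ 0 → ∃ n : ℤ, v x = (((n : ℝ) * ρ : ℝ) : WithTop ℝ)) →
      ((∀ y : K, (γ : WithTop ℝ) ≤ v (y - α) →
          ∀ f : Polynomial K,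
            (∀ t, t ∈ S → v (t - α) = (γ : WithTop ℝ) → 0 ≤ v (f.eval t)) →
            0 ≤ v (f.eval y)) ↔
        (∃ s : ℕ → K, (∀ n, s n ∈ S ∧ v (s n - α) = (γ : WithTop ℝ)) ∧
          (∀ n m : ℕ, n ≠ m → v (s n - s m) = (γ : WithTop ℝ)) ∧
          (∀ n, v (α - s n) = (γ : WithTop ℝ))))) := by
  obtain ⟨π, hπ, hπ_top⟩ := hrank
  have key := ball_subset_polynomialClosure_iff hπ hπ_top (T := {t | t ∈ S ∧ v (t - α) = γ})
    fun t ht => ht.2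
  simp only [Set.subset_def, polynomialClosure, Set.mem_ofPred_eq, and_imp] at key
  have hαs (s : ℕ → K) (hs : ∀ n, s n ∈ S ∧ v (s n - α) = γ) (n : ℕ) : v (α - s n) = γ := by
    rw [v.map_sub_swap]; exact (hs n).2
  refine ⟨key.trans ⟨?_, ?_⟩, fun ⟨ρ, hρ, hv⟩ => key.trans ⟨?_, ?_⟩⟩
  · rintro ⟨s, hs, hst | ⟨⟨u, hu⟩, t, ht, hlim⟩⟩
    · exact ⟨s, hs, .inl ⟨fun n m h => hst h, hαs s hs⟩⟩
    · exact ⟨s, hs, .inr ⟨u, hu.1, hu.2.1, hu.2.2, t, ht, hlim⟩⟩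
  · rintro ⟨s, hs, ⟨hst, -⟩ | ⟨u, hu, hlim, hsu, t, ht, hst⟩⟩
    · exact ⟨s, hs, .inl fun n m h => hst n m h⟩
    · exact ⟨s, hs, .inr ⟨⟨u, hu, hlim, hsu⟩, t, ht, hst⟩⟩
  · rintro ⟨s, hs, hst | ⟨hdiv, -⟩⟩
    · exact ⟨s, hs, fun n m h => hst h, hαs s hs⟩
    · exact (not_isPseudoDivergent_of_discrete hρ hv s γ hdiv).elim
  · rintro ⟨s, hs, hst, -⟩
    exact ⟨s, hs, .inl fun n m h => hst n m h⟩

/-- Let `V` be a rank-one valuation domain, `S ⊆ V`, `α ∈ V`,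
`γ ∈ Γ_v`, and `S_{α,γ} = {s ∈ S : v (s - α) = γ}`.  Then `B(α,γ)` is contained in
the polynomial closure of `S_{α,γ}` iff `S_{α,γ}` contains a pseudo-monotone
sequence `E` with breadth `γ` which is either pseudo-stationary with pseudo-limit
`α`, or pseudo-divergent with a pseudo-limit belonging to `S_{α,γ}`.  If `V` is
discrete (a DVR), only the pseudo-stationary case occurs. -/
theorem stmt18 {K : Type*} [Field K] (v : AddValuation K (WithTop ℝ))
    (hrank : ∃ π : K, 0 < v π ∧ v π ≠ ⊤)
    (S : Set K) (hS : ∀ s ∈ S, 0 ≤ v s)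
    (α : K) (hα : 0 ≤ v α)
    (γ : ℝ) (hγ : ∃ x : K, x ≠ 0 ∧ v x = (γ : WithTop ℝ)) :
    ((∀ y : K, (γ : WithTop ℝ) ≤ v (y - α) →
        ∀ f : Polynomial K,
          (∀ t, t ∈ S → v (t - α) = (γ : WithTop ℝ) → 0 ≤ v (f.eval t)) →
          0 ≤ v (f.eval y)) ↔
      (∃ s : ℕ → K, (∀ n, s n ∈ S ∧ v (s n - α) = (γ : WithTop ℝ)) ∧
        (((∀ n m : ℕ, n ≠ m → v (s n - s m) = (γ : WithTop ℝ)) ∧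
            (∀ n, v (α - s n) = (γ : WithTop ℝ))) ∨
          (∃ u : ℕ → ℝ, StrictAnti u ∧ Tendsto u atTop (𝓝 γ) ∧
            (∀ n, v (s (n + 1) - s n) = (u n : WithTop ℝ)) ∧
            ∃ t : K, (t ∈ S ∧ v (t - α) = (γ : WithTop ℝ)) ∧
              ∀ n, v (t - s (n + 1)) < v (t - s n))))) ∧
    ((∃ ρ : ℝ, 0 < ρ ∧ ∀ x : K, x ≠ 0 → ∃ n : ℤ, v x = (((n : ℝ) * ρ : ℝ) : WithTop ℝ)) →
      ((∀ y : K, (γ : WithTop ℝ) ≤ v (y - α) →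
          ∀ f : Polynomial K,
            (∀ t, t ∈ S → v (t - α) = (γ : WithTop ℝ) → 0 ≤ v (f.eval t)) →
            0 ≤ v (f.eval y)) ↔
        (∃ s : ℕ → K, (∀ n, s n ∈ S ∧ v (s n - α) = (γ : WithTop ℝ)) ∧
          (∀ n m : ℕ, n ≠ m → v (s n - s m) = (γ : WithTop ℝ)) ∧
          (∀ n, v (α - s n) = (γ : WithTop ℝ))))) :=
  stmt18_general v hrank S α γ
end
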